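/- arXiv:1804.06146 — 10 statements merged into one kernel-verified Lean document; each statement's English description precedes it below -/
import Mathlib

section
/- Let d ≥ 1, let γ = (γ_1,…,γ_d) be a vector of positive real numbers, and let B ⊆ ℕ^d be a finite nonempty set whose complement ℕ^d \ B is an ideal of ℕ^d (i.e., closed under addition of arbitrary elements of ℕ^d). Then mean(B·γ) ≤ (d/(d+1))·max(B·γ), where mean(B·γ) := (1/#B)·Σ_{b∈B} b·γ and max(B·γ) := max_{b∈B} b·γ. -/
/-- The weight of `m ∈ ℕ^d` with respect to the weight vector `γ`. -/
noncomputable def weight (d : ℕ) (γ : Fin d → ℝ) (m : Fin d → ℕ) : ℝ :=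
  ∑ i, (m i : ℝ) * γ i

/-!
Since the complement of `B` is an ideal, `B` is a lower set, so every line of `B` parallel to the
`i`-th axis is an interval `{0, …, t}`. Reflecting each such line, `k ↦ t - k`, is an involution
`σ` of `B`, and `b i * γ i + weight (σ b) = weight (update b i t) ≤ M := max(B·γ)`. Summing over
`b ∈ B` gives `∑ b, b i * γ i + ∑ b, weight b ≤ #B * M` for every coordinate `i`, and summing
these `d` inequalities gives `(d + 1) * ∑ b, weight b ≤ d * #B * M`.
-/

open Function Finset

lemma isLowerSet_of_compl_add_closed {ι : Type*} {B : Set (ι → ℕ)}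
    (hB : ∀ x ∉ B, ∀ y : ι → ℕ, x + y ∉ B) : IsLowerSet B := by
  intro a b hba ha
  by_contra hb
  exact hB b hb (a - b) (by rwa [add_tsub_cancel_of_le hba])

section Columns

variable {d : ℕ}

lemma weight_update (γ : Fin d → ℝ) (b : Fin d → ℕ) (i : Fin d) (k : ℕ) :
    weight d γ (update b i k) = weight d γ b + ((k : ℝ) - b i) * γ i := by
  have hrest : ∑ j ∈ univ.erase i, ((update b i k j : ℕ) : ℝ) * γ j =
      ∑ j ∈ univ.erase i, (b j : ℝ) * γ j :=
    sum_congr rfl fun j hj => by rw [update_of_ne (ne_of_mem_erase hj)]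
  simp only [weight, ← add_sum_erase _ _ (mem_univ i), hrest, update_self]
  ring

variable (B : Finset (Fin d → ℕ)) (i : Fin d)

noncomputable def columnTop (b : Fin d → ℕ) : ℕ :=
  sSup {k | update b i k ∈ B}

lemma finite_setOf_update_mem (b : Fin d → ℕ) : {k | update b i k ∈ B}.Finite :=
  B.finite_toSet.preimage (update_injective b i).injOn

lemma update_columnTop_mem {b : Fin d → ℕ} (hb : b ∈ B) : update b i (columnTop B i b) ∈ B :=
  Nat.sSup_mem ⟨b i, by simpa using hb⟩ (finite_setOf_update_mem B i b).bddAbove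

lemma le_columnTop {b : Fin d → ℕ} (hb : b ∈ B) : b i ≤ columnTop B i b :=
  le_csSup (finite_setOf_update_mem B i b).bddAbove (by simpa using hb)

@[simp]
lemma columnTop_update (b : Fin d → ℕ) (k : ℕ) :
    columnTop B i (update b i k) = columnTop B i b := by
  simp only [columnTop, update_idem]

noncomputable def columnReflect (b : Fin d → ℕ) : Fin d → ℕ :=
  update b i (columnTop B i b - b i)

lemma columnReflect_mem (hB : IsLowerSet (B : Set (Fin d → ℕ))) {b : Fin d → ℕ} (hb : b ∈ B) :
    columnReflect B i b ∈ B :=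
  hB (update_le_update_iff'.2 tsub_le_self) (update_columnTop_mem B i hb)

lemma columnReflect_columnReflect {b : Fin d → ℕ} (hb : b ∈ B) :
    columnReflect B i (columnReflect B i b) = b := by
  simp [columnReflect, Nat.sub_sub_self (le_columnTop B i hb)]

lemma sum_weight_columnReflect (γ : Fin d → ℝ) (hB : IsLowerSet (B : Set (Fin d → ℕ))) :
    ∑ b ∈ B, weight d γ (columnReflect B i b) = ∑ b ∈ B, weight d γ b :=
  sum_nbij' (columnReflect B i) (columnReflect B i) (fun _ hb => columnReflect_mem B i hB hb)
    (fun _ hb => columnReflect_mem B i hB hb) (fun _ hb => columnReflect_columnReflect B i hb)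
    (fun _ hb => columnReflect_columnReflect B i hb) fun _ _ => rfl

lemma mul_add_weight_columnReflect (γ : Fin d → ℝ) {b : Fin d → ℕ} (hb : b ∈ B) :
    (b i : ℝ) * γ i + weight d γ (columnReflect B i b) =
      weight d γ (update b i (columnTop B i b)) := by
  rw [columnReflect, weight_update, weight_update, Nat.cast_sub (le_columnTop B i hb)]
  ring

end Columns

section Sums

variable {d : ℕ} (γ : Fin d → ℝ) {B : Finset (Fin d → ℕ)} {M : ℝ}

lemma sum_mul_add_sum_weight_le (hB : IsLowerSet (B : Set (Fin d → ℕ)))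
    (hM : ∀ b ∈ B, weight d γ b ≤ M) (i : Fin d) :
    ∑ b ∈ B, (b i : ℝ) * γ i + ∑ b ∈ B, weight d γ b ≤ #B * M :=
  calc ∑ b ∈ B, (b i : ℝ) * γ i + ∑ b ∈ B, weight d γ b
      = ∑ b ∈ B, weight d γ (update b i (columnTop B i b)) := by
        rw [← sum_weight_columnReflect B i γ hB, ← sum_add_distrib]
        exact sum_congr rfl fun b hb => mul_add_weight_columnReflect B i γ hb
    _ ≤ ∑ _b ∈ B, M := sum_le_sum fun b hb => hM _ (update_columnTop_mem B i hb)
    _ = #B * M := by rw [sum_const, nsmul_eq_mul]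

lemma succ_mul_sum_weight_le (hB : IsLowerSet (B : Set (Fin d → ℕ)))
    (hM : ∀ b ∈ B, weight d γ b ≤ M) :
    (d + 1) * ∑ b ∈ B, weight d γ b ≤ d * (#B * M) := by
  have h := sum_le_sum fun i (_ : i ∈ univ) => sum_mul_add_sum_weight_le γ hB hM i
  rw [sum_add_distrib, sum_comm] at h
  simp only [sum_const, card_univ, Fintype.card_fin, nsmul_eq_mul] at h
  simp only [weight] at h ⊢
  linarith

lemma inv_card_mul_sum_weight_le (hB : IsLowerSet (B : Set (Fin d → ℕ))) (hBne : B.Nonempty)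
    (hM : ∀ b ∈ B, weight d γ b ≤ M) :
    (#B : ℝ)⁻¹ * ∑ b ∈ B, weight d γ b ≤ d / (d + 1) * M := by
  have hcard : (0 : ℝ) < #B := by exact_mod_cast hBne.card_pos
  rw [inv_mul_le_iff₀ hcard, div_mul_eq_mul_div, mul_div_assoc', le_div_iff₀ (by positivity)]
  linarith [succ_mul_sum_weight_le γ hB hM]

end Sums

theorem stmt_0_general (d : ℕ) (γ : Fin d → ℝ)
    (B : Set (Fin d → ℕ)) (hB : B.Finite)
    (hIdeal : ∀ x ∉ B, ∀ y : Fin d → ℕ, x + y ∉ B) :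
    (B.ncard : ℝ)⁻¹ * ∑ b ∈ hB.toFinset, weight d γ b ≤
      (d / (d + 1)) * sSup (weight d γ '' B) := by
  rcases B.eq_empty_or_nonempty with rfl | hBne
  · simp
  rw [Set.ncard_eq_toFinset_card B hB]
  refine inv_card_mul_sum_weight_le γ ?_ (hB.toFinset_nonempty.2 hBne) fun b hb =>
    le_csSup (hB.image _).bddAbove ⟨b, hB.mem_toFinset.1 hb, rfl⟩
  rw [hB.coe_toFinset]
  exact isLowerSet_of_compl_add_closed hIdeal

/-- Zhai's Lemma: if `B ⊆ ℕ^d` is finite, nonempty, and its complement is an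
`ℕ^d`-ideal, then `mean(B·γ) ≤ d/(d+1) · max(B·γ)`. -/
theorem stmt_0 (d : ℕ) (hd : 1 ≤ d) (γ : Fin d → ℝ) (hγ : ∀ i, 0 < γ i)
    (B : Set (Fin d → ℕ)) (hB : B.Finite) (hBne : B.Nonempty)
    (hIdeal : ∀ x ∉ B, ∀ y : Fin d → ℕ, x + y ∉ B) :
    (B.ncard : ℝ)⁻¹ * ∑ b ∈ hB.toFinset, weight d γ b ≤
      (d / (d + 1)) * sSup (weight d γ '' B) :=
  stmt_0_general d γ B hB hIdeal
end

section
/- Let d ≥ 1 and let γ = (γ_1,…,γ_d) be a vector of positive integers. Then for every integer n > 0, h(n,γ) ≤ d/(d+1). -/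
/-- `h_j = #{m ∈ ℕ^d | j ≤ m·γ < j+1}`. -/
noncomputable def hcount (d : ℕ) (γ : Fin d → ℝ) (j : ℕ) : ℕ :=
  Set.ncard {m : Fin d → ℕ | (j : ℝ) ≤ weight d γ m ∧ weight d γ m < j + 1}

/-- `h(n,γ) = (Σ_{j=0}^n j·h_j) / (n·Σ_{j=0}^n h_j)`. -/
noncomputable def hratio (d : ℕ) (γ : Fin d → ℝ) (n : ℕ) : ℝ :=
  (∑ j ∈ Finset.range (n + 1), (j : ℝ) * hcount d γ j) /
    (n * ∑ j ∈ Finset.range (n + 1), (hcount d γ j : ℝ))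

open Finset Function

namespace WeightedSimplex

variable {ι : Type*} [Fintype ι]

def natWeight (γ m : ι → ℕ) : ℕ := ∑ i, m i * γ i

theorem coord_mul_le_natWeight {γ : ι → ℕ} (m : ι → ℕ) (i : ι) : m i * γ i ≤ natWeight γ m :=
  single_le_sum (f := fun i => m i * γ i) (fun _ _ => Nat.zero_le _) (mem_univ i)

variable [DecidableEq ι] (γ : ι → ℕ) (n : ℕ)

def simplex : Finset (ι → ℕ) :=
  {m ∈ Fintype.piFinset fun _ => range (n + 1) | natWeight γ m ≤ n}

def restWeight (i : ι) (m : ι → ℕ) : ℕ := ∑ j ∈ univ.erase i, m j * γ j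

def reflect (i : ι) (m : ι → ℕ) : ι → ℕ :=
  update m i ((n - restWeight γ i m) / γ i - m i)

variable {γ n}

theorem mem_simplex (hγ : ∀ i, 0 < γ i) {m : ι → ℕ} : m ∈ simplex γ n ↔ natWeight γ m ≤ n := by
  refine ⟨fun hm => (mem_filter.1 hm).2, fun hm => mem_filter.2 ⟨?_, hm⟩⟩
  refine Fintype.mem_piFinset.2 fun i => mem_range_succ_iff.2 ?_
  calc m i ≤ m i * γ i := Nat.le_mul_of_pos_right _ (hγ i)
    _ ≤ natWeight γ m := coord_mul_le_natWeight m i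
    _ ≤ n := hm

theorem natWeight_eq_add_restWeight (m : ι → ℕ) (i : ι) :
    natWeight γ m = m i * γ i + restWeight γ i m :=
  (add_sum_erase _ (fun j => m j * γ j) (mem_univ i)).symm

theorem restWeight_update (m : ι → ℕ) (i : ι) (t : ℕ) :
    restWeight γ i (update m i t) = restWeight γ i m :=
  sum_congr rfl fun _ hj => by rw [update_of_ne (ne_of_mem_erase hj)]

theorem reflect_apply_self (m : ι → ℕ) (i : ι) :
    reflect γ n i m i = (n - restWeight γ i m) / γ i - m i :=
  update_self ..

theorem coord_le_of_mem_simplex (hγ : ∀ i, 0 < γ i) {m : ι → ℕ} (hm : m ∈ simplex γ n) (i : ι) :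
    m i ≤ (n - restWeight γ i m) / γ i := by
  have := natWeight_eq_add_restWeight (γ := γ) m i
  have := (mem_simplex hγ).1 hm
  exact (Nat.le_div_iff_mul_le (hγ i)).2 (by omega)

theorem reflect_reflect (hγ : ∀ i, 0 < γ i) {m : ι → ℕ} (hm : m ∈ simplex γ n) (i : ι) :
    reflect γ n i (reflect γ n i m) = m := by
  have := coord_le_of_mem_simplex hγ hm i
  ext j
  rcases eq_or_ne j i with rfl | hj
  · rw [reflect_apply_self, reflect, restWeight_update, update_self]
    omega
  · simp only [reflect, update_of_ne hj]

theorem reflect_mem_simplex (hγ : ∀ i, 0 < γ i) {m : ι → ℕ} (hm : m ∈ simplex γ n) (i : ι) :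
    reflect γ n i m ∈ simplex γ n := by
  rw [mem_simplex hγ, natWeight_eq_add_restWeight _ i, reflect_apply_self, reflect,
    restWeight_update]
  have := Nat.div_mul_le_self (n - restWeight γ i m) (γ i)
  have := Nat.mul_le_mul_right (γ i) (Nat.sub_le ((n - restWeight γ i m) / γ i) (m i))
  have := natWeight_eq_add_restWeight (γ := γ) m i
  have := (mem_simplex hγ).1 hm
  omega

theorem sum_coord_mul_le (hγ : ∀ i, 0 < γ i) (i : ι) :
    ∑ m ∈ simplex γ n, m i * γ i ≤ ∑ m ∈ simplex γ n, (n - natWeight γ m) := by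
  calc ∑ m ∈ simplex γ n, m i * γ i = ∑ m ∈ simplex γ n, reflect γ n i m i * γ i :=
        sum_nbij' (reflect γ n i) (reflect γ n i) (fun m hm => reflect_mem_simplex hγ hm i)
          (fun m hm => reflect_mem_simplex hγ hm i) (fun m hm => reflect_reflect hγ hm i)
          (fun m hm => reflect_reflect hγ hm i) fun m hm => by rw [reflect_reflect hγ hm i]
    _ ≤ ∑ m ∈ simplex γ n, (n - natWeight γ m) := sum_le_sum fun m hm => by
        rw [reflect_apply_self, Nat.sub_mul, natWeight_eq_add_restWeight m i]
        have := Nat.div_mul_le_self (n - restWeight γ i m) (γ i)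
        omega

theorem sum_natWeight_mul_succ_le (hγ : ∀ i, 0 < γ i) :
    (∑ m ∈ simplex γ n, natWeight γ m) * (Fintype.card ι + 1) ≤
      Fintype.card ι * (n * #(simplex γ n)) := by
  set W := ∑ m ∈ simplex γ n, natWeight γ m
  have hcomplement : W + ∑ m ∈ simplex γ n, (n - natWeight γ m) = n * #(simplex γ n) := by
    rw [← sum_add_distrib, sum_congr rfl fun m hm => Nat.add_sub_of_le ((mem_simplex hγ).1 hm),
      sum_const, smul_eq_mul, mul_comm]
  have hcoords : W ≤ Fintype.card ι * ∑ m ∈ simplex γ n, (n - natWeight γ m) :=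
    calc W = ∑ i, ∑ m ∈ simplex γ n, m i * γ i := sum_comm
      _ ≤ ∑ _i : ι, ∑ m ∈ simplex γ n, (n - natWeight γ m) :=
          sum_le_sum fun i _ => sum_coord_mul_le hγ i
      _ = _ := by rw [sum_const, card_univ, smul_eq_mul]
  nlinarith

end WeightedSimplex

open WeightedSimplex

theorem weight_natCast {d : ℕ} (γ m : Fin d → ℕ) :
    weight d (fun i => (γ i : ℝ)) m = natWeight γ m := by
  simp [weight, natWeight]

theorem hcount_natCast_eq_card {d : ℕ} {γ : Fin d → ℕ} (hγ : ∀ i, 0 < γ i) {j n : ℕ}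
    (hj : j ≤ n) :
    hcount d (fun i => (γ i : ℝ)) j = #{m ∈ simplex γ n | natWeight γ m = j} := by
  rw [hcount, ← Set.ncard_coe_finset]
  congr 1
  ext m
  simp only [Set.mem_ofPred_eq, coe_filter, mem_simplex hγ, weight_natCast]
  constructor
  · rintro ⟨hlo, hhi⟩
    have hlo : j ≤ natWeight γ m := by exact_mod_cast hlo
    have hhi : natWeight γ m < j + 1 := by exact_mod_cast hhi
    omega
  · rintro ⟨-, rfl⟩
    simp

theorem hratio_natCast {d : ℕ} {γ : Fin d → ℕ} (hγ : ∀ i, 0 < γ i) (n : ℕ) :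
    hratio d (fun i => (γ i : ℝ)) n =
      (∑ m ∈ simplex γ n, natWeight γ m : ℕ) / (n * #(simplex γ n)) := by
  have hmaps : ∀ m ∈ simplex γ n, natWeight γ m ∈ range (n + 1) := fun m hm =>
    mem_range_succ_iff.2 ((mem_simplex hγ).1 hm)
  have hcount_eq : ∀ j ∈ range (n + 1),
      hcount d (fun i => (γ i : ℝ)) j = #{m ∈ simplex γ n | natWeight γ m = j} :=
    fun j hj => hcount_natCast_eq_card hγ (mem_range_succ_iff.1 hj)
  have hnum : ∑ j ∈ range (n + 1), j * hcount d (fun i => (γ i : ℝ)) j =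
      ∑ m ∈ simplex γ n, natWeight γ m := by
    rw [← sum_fiberwise_of_maps_to hmaps]
    refine sum_congr rfl fun j hj => ?_
    rw [hcount_eq j hj, sum_congr rfl fun m hm => (mem_filter.1 hm).2, sum_const, smul_eq_mul,
      mul_comm]
  have hden : ∑ j ∈ range (n + 1), hcount d (fun i => (γ i : ℝ)) j = #(simplex γ n) := by
    rw [sum_congr rfl hcount_eq, card_eq_sum_card_fiberwise hmaps]
  rw [hratio, ← hnum, ← hden]
  push_cast
  rfl

theorem stmt_3_general (d : ℕ) (γ : Fin d → ℕ) (hγ : ∀ i, 0 < γ i)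
    (n : ℕ) :
    hratio d (fun i => (γ i : ℝ)) n ≤ d / (d + 1) := by
  have key := sum_natWeight_mul_succ_le (n := n) hγ
  rw [Fintype.card_fin] at key
  rw [hratio_natCast hγ]
  refine div_le_of_le_mul₀ (by positivity) (by positivity) ?_
  rw [div_mul_eq_mul_div, le_div_iff₀ (by positivity)]
  exact_mod_cast key

theorem stmt_3 (d : ℕ) (hd : 1 ≤ d) (γ : Fin d → ℕ) (hγ : ∀ i, 0 < γ i)
    (n : ℕ) (hn : 0 < n) :
    hratio d (fun i => (γ i : ℝ)) n ≤ d / (d + 1) :=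
  stmt_3_general d γ hγ n
end

section
/- For d = 2, n = 4 and γ = (12/8, 13/8), one has h(4, γ) = 27/40, which is strictly greater than d/(d+1) = 2/3. Hence the bound h(n,γ) ≤ d/(d+1) can fail for non-integral weight vectors γ. -/
/-!
For `γ = (12, 13) / 8` the `j`-th level consists of the `m` with `8j ≤ 12 m₀ + 13 m₁ < 8j + 8`;
since both weights are at least `1` it lies in the box `[0, j]²`, so the counts are finite
computations: `(h₀, …, h₄) = (1, 2, 0, 3, 4)`, whence `h(4, γ) = (2 + 9 + 16) / (4 · 10)`.
-/

section RationalWeights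

variable {d : ℕ} (c : Fin d → ℕ) {q : ℕ}

theorem hcount_eq_card {γ : Fin d → ℝ} {j : ℕ} {s : Finset (Fin d → ℕ)}
    (hs : ∀ m, ((j : ℝ) ≤ weight d γ m ∧ weight d γ m < j + 1) ↔ m ∈ s) :
    hcount d γ j = s.card := by
  rw [hcount, ← Set.ncard_coe_finset]
  exact congrArg Set.ncard (Set.ext hs)

theorem weight_div_natCast (m : Fin d → ℕ) :
    weight d (fun i => (c i : ℝ) / q) m = ((∑ i, m i * c i : ℕ) : ℝ) / q := by
  simp only [weight, Nat.cast_sum, Nat.cast_mul, Finset.sum_div, mul_div_assoc]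

theorem le_weight_div_natCast_lt_iff (hq : 0 < q) (j : ℕ) (m : Fin d → ℕ) :
    ((j : ℝ) ≤ weight d (fun i => (c i : ℝ) / q) m ∧
        weight d (fun i => (c i : ℝ) / q) m < j + 1) ↔
      q * j ≤ ∑ i, m i * c i ∧ ∑ i, m i * c i < q * j + q := by
  have hq' : (0 : ℝ) < q := Nat.cast_pos.mpr hq
  rw [weight_div_natCast, le_div_iff₀ hq', div_lt_iff₀ hq', ← Nat.cast_le (α := ℝ),
    ← Nat.cast_lt (α := ℝ)]
  push_cast
  constructor <;> rintro ⟨h₁, h₂⟩ <;> constructor <;> linarith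

theorem hcount_div_natCast_eq_card_filter (hq : 0 < q) (hc : ∀ i, q ≤ c i) (j : ℕ) :
    hcount d (fun i => (c i : ℝ) / q) j =
      ((Fintype.piFinset fun _ => Finset.range (j + 1)).filter
        fun m => q * j ≤ ∑ i, m i * c i ∧ ∑ i, m i * c i < q * j + q).card := by
  refine hcount_eq_card fun m => ?_
  rw [le_weight_div_natCast_lt_iff c hq, Finset.mem_filter, Fintype.mem_piFinset,
    iff_and_self]
  rintro ⟨-, hlt⟩ i
  have hi : q * m i ≤ ∑ i, m i * c i :=
    calc q * m i ≤ m i * c i := by rw [mul_comm]; exact Nat.mul_le_mul_left _ (hc i)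
      _ ≤ ∑ i, m i * c i :=
        Finset.single_le_sum (f := fun i => m i * c i) (by simp) (Finset.mem_univ i)
  exact Finset.mem_range.mpr
    (Nat.lt_of_mul_lt_mul_left (hi.trans_lt (hlt.trans_eq (mul_add_one q j).symm)))

end RationalWeights

theorem stmt_4 :
    hratio 2 ![12 / 8, 13 / 8] 4 = 27 / 40 ∧ (27 / 40 : ℝ) > 2 / (2 + 1) := by
  have hγ : (![12 / 8, 13 / 8] : Fin 2 → ℝ) =
      fun i => ((![12, 13] : Fin 2 → ℕ) i : ℝ) / (8 : ℕ) := by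
    ext i; fin_cases i <;> norm_num
  have hc : ∀ i, 8 ≤ (![12, 13] : Fin 2 → ℕ) i := by decide
  have count := hcount_div_natCast_eq_card_filter ![12, 13] (by norm_num) hc
  have h₀ : hcount 2 ![12 / 8, 13 / 8] 0 = 1 := by rw [hγ, count]; rfl
  have h₁ : hcount 2 ![12 / 8, 13 / 8] 1 = 2 := by rw [hγ, count]; rfl
  have h₂ : hcount 2 ![12 / 8, 13 / 8] 2 = 0 := by rw [hγ, count]; rfl
  have h₃ : hcount 2 ![12 / 8, 13 / 8] 3 = 3 := by rw [hγ, count]; rfl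
  have h₄ : hcount 2 ![12 / 8, 13 / 8] 4 = 4 := by rw [hγ, count]; rfl
  refine ⟨?_, by norm_num⟩
  simp only [hratio, Finset.sum_range_succ, Finset.sum_range_zero, h₀, h₁, h₂, h₃, h₄]
  norm_num
end

section
/- Let d ≥ 1 and let γ = (γ_1,…,γ_d) be any vector of positive real numbers. Then lim_{n→∞} h(n,γ) = d/(d+1). -/
/-!
Let `N(t)` count the points of `ℕ^d` of weight `< t`, so that `Σ_{j ≤ n} h_j = N(n+1)` and, by
Abel summation, `h(n,γ) = 1 - Σ_{k ≤ n} N(k) / (n N(n+1))`. Writing a point of weight `< l t` as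
`l q + r` with `0 ≤ r_i < l` and `q` of weight `< t` gives `N(l t) ≤ l^d N(t)`; together with
monotonicity this forces `N(n) / n^d` to converge, as in Fekete's lemma, and a box inside the
simplex shows the limit `C` is positive. Then `Σ_{k < n} N(k) ~ C n^{d+1} / (d+1)` and
`h(n,γ) → 1 - 1/(d+1)`.
-/

open Filter Finset Topology Asymptotics

theorem tendsto_sum_range_pow_div_pow_succ (d : ℕ) :
    Tendsto (fun n : ℕ => (∑ k ∈ range n, (k : ℝ) ^ d) / (n : ℝ) ^ (d + 1)) atTop
      (𝓝 (1 / (d + 1))) := by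
  have hmono (n : ℕ) : MonotoneOn (fun x : ℝ => x ^ d) (Set.Icc 0 (0 + n)) :=
    fun x hx y _ hxy => pow_le_pow_left₀ hx.1 hxy d
  have hint (n : ℕ) : ∫ x in (0 : ℝ)..n, x ^ d = (n : ℝ) ^ (d + 1) / (d + 1) := by
    simp [integral_pow]
  have hupper (n : ℕ) : ∑ k ∈ range n, (k : ℝ) ^ d ≤ (n : ℝ) ^ (d + 1) / (d + 1) := by
    simpa [hint] using (hmono n).sum_le_integral
  have hlower (n : ℕ) :
      (n : ℝ) ^ (d + 1) / (d + 1) ≤ ∑ k ∈ range n, (k : ℝ) ^ d + (n : ℝ) ^ d := by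
    have h := (hmono n).integral_le_sum
    have hshift := (sum_range_succ' (fun k => (k : ℝ) ^ d) n).symm.trans
      (sum_range_succ (fun k => (k : ℝ) ^ d) n)
    simp only [zero_add, Nat.cast_add, Nat.cast_one, hint] at h hshift
    push_cast at hshift
    have : (0 : ℝ) ≤ 0 ^ d := by positivity
    linarith
  have hgap : Tendsto (fun n : ℕ => 1 / ((d : ℝ) + 1) - 1 / n) atTop (𝓝 (1 / (d + 1))) := by
    simpa using tendsto_one_div_atTop_nhds_zero_nat.const_sub (1 / ((d : ℝ) + 1))
  refine tendsto_of_tendsto_of_tendsto_of_le_of_le' hgap tendsto_const_nhds ?_ ?_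
  all_goals filter_upwards [eventually_gt_atTop 0] with n hn
  · have hn' : (0 : ℝ) < n := by exact_mod_cast hn
    rw [le_div_iff₀ (by positivity)]
    have := hlower n
    calc (1 / ((d : ℝ) + 1) - 1 / n) * n ^ (d + 1) = (n : ℝ) ^ (d + 1) / (d + 1) - n ^ d := by
          field_simp; ring
      _ ≤ _ := by linarith
  · rw [div_le_iff₀ (by positivity)]
    calc _ ≤ (n : ℝ) ^ (d + 1) / (d + 1) := hupper n
      _ = _ := by ring

theorem tendsto_sum_range_div_pow_succ {a : ℕ → ℝ} {d : ℕ} {C : ℝ}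
    (h : Tendsto (fun n : ℕ => a n / (n : ℝ) ^ d) atTop (𝓝 C)) :
    Tendsto (fun n : ℕ => (∑ k ∈ range n, a k) / (n : ℝ) ^ (d + 1)) atTop
      (𝓝 (C / (d + 1))) := by
  have hpow := tendsto_sum_range_pow_div_pow_succ d
  have hpos : ∀ᶠ n : ℕ in atTop, (n : ℝ) ^ (d + 1) ≠ 0 :=
    (eventually_gt_atTop 0).mono fun n hn => by positivity
  have herr : (fun k : ℕ => a k - C * (k : ℝ) ^ d) =o[atTop] fun k : ℕ => (k : ℝ) ^ d := by
    have hk_pow : ∀ᶠ k : ℕ in atTop, (k : ℝ) ^ d ≠ 0 :=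
      (eventually_gt_atTop 0).mono fun k hk => pow_ne_zero _ (Nat.cast_ne_zero.2 hk.ne')
    rw [isLittleO_iff_tendsto' (hk_pow.mono fun k hk h0 => absurd h0 hk), ← sub_self C]
    refine (h.sub_const C).congr' (hk_pow.mono fun k hk => ?_)
    dsimp only
    rw [sub_div, mul_div_cancel_right₀ _ hk]
  have hsum_top : Tendsto (fun n : ℕ => ∑ k ∈ range n, (k : ℝ) ^ d) atTop atTop := by
    refine ((hpow.pos_mul_atTop (by positivity)
      (tendsto_pow_atTop (Nat.succ_ne_zero d) |>.comp tendsto_natCast_atTop_atTop))).congr' ?_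
    filter_upwards [hpos] with n hn
    exact div_mul_cancel₀ _ hn
  have hsum_bigO : (fun n : ℕ => ∑ k ∈ range n, (k : ℝ) ^ d) =O[atTop]
      fun n : ℕ => (n : ℝ) ^ (d + 1) := by
    refine IsBigO.of_bound 1 (Eventually.of_forall fun n => ?_)
    rw [Real.norm_of_nonneg (by positivity), Real.norm_of_nonneg (by positivity), one_mul,
      pow_succ']
    simpa using sum_le_card_nsmul (range n) (fun k : ℕ => (k : ℝ) ^ d) _ fun k hk =>
      pow_le_pow_left₀ (Nat.cast_nonneg k) (Nat.cast_le.2 (mem_range.1 hk).le) d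
  have herr_sum : Tendsto (fun n : ℕ => (∑ k ∈ range n, (a k - C * (k : ℝ) ^ d)) /
      (n : ℝ) ^ (d + 1)) atTop (𝓝 0) :=
    ((herr.sum_range (fun k => by positivity) hsum_top).trans_isBigO
      hsum_bigO).tendsto_div_nhds_zero
  have := (hpow.const_mul C).add herr_sum
  rw [mul_one_div, add_zero] at this
  refine this.congr fun n => ?_
  rw [← mul_div_assoc, ← add_div, mul_sum, ← sum_add_distrib]
  simp

theorem tendsto_comp_succ_div_pow {a : ℕ → ℝ} {d : ℕ} {C : ℝ}
    (h : Tendsto (fun n : ℕ => a n / (n : ℝ) ^ d) atTop (𝓝 C)) :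
    Tendsto (fun n : ℕ => a (n + 1) / (n : ℝ) ^ d) atTop (𝓝 C) := by
  have hsucc : Tendsto (fun n : ℕ => a (n + 1) / ((n : ℝ) + 1) ^ d) atTop (𝓝 C) := by
    simpa [Function.comp_def] using h.comp (tendsto_add_atTop_nat 1)
  have hratio : Tendsto (fun n : ℕ => (1 + 1 / (n : ℝ)) ^ d) atTop (𝓝 1) := by
    simpa using (tendsto_one_div_atTop_nhds_zero_nat.const_add (1 : ℝ)).pow d
  refine (mul_one C ▸ hsucc.mul hratio).congr' ?_
  filter_upwards [eventually_gt_atTop 0] with n hn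
  have hn' : (n : ℝ) ≠ 0 := by positivity
  rw [one_add_div hn', div_pow]
  field_simp

theorem sum_range_succ_natCast_mul {R : Type*} [CommRing R] (h : ℕ → R) (n : ℕ) :
    ∑ j ∈ range (n + 1), (j : R) * h j
      = n * ∑ j ∈ range (n + 1), h j - ∑ k ∈ range n, ∑ j ∈ range (k + 1), h j := by
  induction n with
  | zero => simp
  | succ n ih =>
    rw [sum_range_succ (fun j => (j : R) * h j), ih,
      sum_range_succ (fun k => ∑ j ∈ range (k + 1), h j), sum_range_succ h (n + 1)]
    push_cast
    ring

theorem tendsto_sum_range_succ_natCast_mul_div {h : ℕ → ℝ} {d : ℕ} {C : ℝ}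
    (hH : Tendsto (fun n : ℕ => (∑ j ∈ range (n + 1), h j) / (n : ℝ) ^ d) atTop (𝓝 C))
    (hC : C ≠ 0) :
    Tendsto (fun n : ℕ => (∑ j ∈ range (n + 1), (j : ℝ) * h j) /
      (n * ∑ j ∈ range (n + 1), h j)) atTop (𝓝 (d / (d + 1))) := by
  set H : ℕ → ℝ := fun n => ∑ j ∈ range (n + 1), h j
  have hmean : Tendsto (fun n : ℕ => (∑ k ∈ range n, H k) / (n * H n)) atTop
      (𝓝 (1 / (d + 1))) := by
    have := (tendsto_sum_range_div_pow_succ hH).div hH hC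
    rw [div_div_cancel_left' hC, ← one_div] at this
    refine this.congr' ((eventually_gt_atTop 0).mono fun n hn => ?_)
    have hn' : (n : ℝ) ≠ 0 := by positivity
    simp only [Pi.div_apply, H]
    rw [pow_succ', ← div_div, div_div_div_cancel_right₀ (pow_ne_zero d hn'), div_div]
  have hlim : (d : ℝ) / (d + 1) = 1 - 1 / (d + 1) := by field_simp; ring
  rw [hlim]
  refine (tendsto_const_nhds.sub hmean).congr' ?_
  filter_upwards [eventually_gt_atTop 0, hH.eventually_ne hC] with n hn hHn
  have hnH : (n : ℝ) * H n ≠ 0 := mul_ne_zero (by positivity) (div_ne_zero_iff.1 hHn).1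
  rw [sum_range_succ_natCast_mul, sub_div, div_self hnH]

section SubmultiplicativeGrowth

variable {f : ℕ → ℝ} {d : ℕ}

theorem div_pow_le_one_add_div_pow_mul (hf0 : ∀ n, 0 ≤ f n) (hf : Monotone f)
    (hmul : ∀ l t, 0 < l → f (l * t) ≤ l ^ d * f t) {s t : ℕ} (hs : 0 < s) (ht : 0 < t) :
    f s / (s : ℝ) ^ d ≤ (1 + t / s : ℝ) ^ d * (f t / (t : ℝ) ^ d) := by
  have hs' : (0 : ℝ) < s := by exact_mod_cast hs
  have ht' : (0 : ℝ) < t := by exact_mod_cast ht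
  set l := s / t + 1
  have hl : (l : ℝ) ≤ (s + t) / t := by
    rw [add_div, div_self ht'.ne']
    push_cast [l]
    gcongr
    exact Nat.cast_div_le
  have hfs : f s ≤ ((s + t) / t : ℝ) ^ d * f t :=
    calc f s ≤ f (l * t) := hf (by rw [add_one_mul]; exact (Nat.lt_div_mul_add ht).le)
      _ ≤ l ^ d * f t := hmul l t (Nat.succ_pos _)
      _ ≤ _ := by
        have := hf0 t
        gcongr
  calc f s / (s : ℝ) ^ d ≤ ((s + t) / t : ℝ) ^ d * f t / (s : ℝ) ^ d := by gcongr
    _ = _ := by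
      rw [one_add_div hs'.ne', div_pow, div_pow]
      field_simp

theorem exists_tendsto_div_pow_of_le_pow_mul (hf0 : ∀ n, 0 ≤ f n) (hf : Monotone f)
    (hmul : ∀ l t, 0 < l → f (l * t) ≤ l ^ d * f t) :
    ∃ C, Tendsto (fun n : ℕ => f n / (n : ℝ) ^ d) atTop (𝓝 C) := by
  set g : ℕ → ℝ := fun n => f n / (n : ℝ) ^ d
  have hbdd_above : IsBoundedUnder (· ≤ ·) atTop g := by
    refine isBoundedUnder_of_eventually_le (a := f 1)
      ((eventually_gt_atTop 0).mono fun n hn => ?_)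
    have := hmul n 1 hn
    rw [mul_one] at this
    simp only [g]
    rw [div_le_iff₀ (by positivity)]
    linarith
  have hbdd_below : IsBoundedUnder (· ≥ ·) atTop g :=
    isBoundedUnder_of_eventually_ge
      (Eventually.of_forall fun n => div_nonneg (hf0 n) (by positivity))
  -- Every value `g t` bounds `limsup g` from above, so `limsup g ≤ liminf g`.
  have hlimsup_le (t : ℕ) (ht : 0 < t) : limsup g atTop ≤ g t := by
    have hbound : Tendsto (fun s : ℕ => (1 + t / s : ℝ) ^ d * g t) atTop (𝓝 (g t)) := by
      simpa using ((tendsto_const_div_atTop_nhds_zero_nat (t : ℝ)).const_add 1).pow d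
        |>.mul_const (g t)
    rw [← hbound.limsup_eq]
    exact limsup_le_limsup ((eventually_gt_atTop 0).mono fun s hs =>
      div_pow_le_one_add_div_pow_mul hf0 hf hmul hs ht) hbdd_below.isCoboundedUnder_le
      hbound.isBoundedUnder_le
  refine ⟨limsup g atTop, tendsto_of_le_liminf_of_limsup_le ?_ le_rfl hbdd_above hbdd_below⟩
  exact le_liminf_of_le hbdd_above.isCoboundedUnder_ge ((eventually_gt_atTop 0).mono hlimsup_le)

end SubmultiplicativeGrowth

def weightBelow (d : ℕ) (γ : Fin d → ℝ) (t : ℝ) : Set (Fin d → ℕ) :=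
  {m | weight d γ m < t}

noncomputable def weightCount (d : ℕ) (γ : Fin d → ℝ) (t : ℝ) : ℕ :=
  (weightBelow d γ t).ncard

section WeightCount

variable {d : ℕ} {γ : Fin d → ℝ}

theorem weight_nonneg (hγ : ∀ i, 0 ≤ γ i) (m : Fin d → ℕ) : 0 ≤ weight d γ m :=
  sum_nonneg fun i _ => mul_nonneg (Nat.cast_nonneg _) (hγ i)

theorem natCast_le_div_of_mem_weightBelow (hγ : ∀ i, 0 < γ i) {t : ℝ} {m : Fin d → ℕ}
    (hm : m ∈ weightBelow d γ t) (i : Fin d) : (m i : ℝ) ≤ t / γ i := by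
  rw [le_div_iff₀ (hγ i)]
  exact (single_le_sum (fun j _ => mul_nonneg (Nat.cast_nonneg (m j)) (hγ j).le)
    (mem_univ i)).trans hm.le

theorem weightBelow_finite (hγ : ∀ i, 0 < γ i) (t : ℝ) : (weightBelow d γ t).Finite :=
  (Set.finite_Iic fun i => ⌊t / γ i⌋₊).subset fun _ hm i =>
    Nat.le_floor (natCast_le_div_of_mem_weightBelow hγ hm i)

theorem weightCount_mono (hγ : ∀ i, 0 < γ i) : Monotone (weightCount d γ) :=
  fun _ t hst =>
    Set.ncard_le_ncard (fun _ hm => lt_of_lt_of_le hm hst) (weightBelow_finite hγ t)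

theorem weightCount_zero (hγ : ∀ i, 0 < γ i) : weightCount d γ 0 = 0 := by
  rw [weightCount, Set.ncard_eq_zero (weightBelow_finite hγ 0)]
  exact Set.eq_empty_of_forall_notMem fun m hm =>
    (weight_nonneg (fun i => (hγ i).le) m).not_gt hm

theorem weightCount_add_hcount (hγ : ∀ i, 0 < γ i) (j : ℕ) :
    weightCount d γ j + hcount d γ j = weightCount d γ (j + 1) := by
  have hdiff : {m | (j : ℝ) ≤ weight d γ m ∧ weight d γ m < j + 1}
      = weightBelow d γ (j + 1) \ weightBelow d γ j := by
    ext m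
    simp only [weightBelow, Set.mem_ofPred_eq, Set.mem_sdiff, not_lt]
    tauto
  rw [weightCount, hcount, hdiff, add_comm, weightCount,
    Set.ncard_sdiff_add_ncard_of_subset (fun m hm => ?_) (weightBelow_finite hγ _)]
  exact lt_trans (b := (j : ℝ)) hm (lt_add_one _)

theorem sum_range_hcount (hγ : ∀ i, 0 < γ i) (n : ℕ) :
    ∑ j ∈ range n, hcount d γ j = weightCount d γ n := by
  induction n with
  | zero => simp [weightCount_zero hγ]
  | succ n ih => rw [sum_range_succ, ih, weightCount_add_hcount hγ, Nat.cast_succ]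

theorem weightCount_natCast_mul_le (hγ : ∀ i, 0 < γ i) {l : ℕ} (hl : 0 < l) (t : ℝ) :
    weightCount d γ (l * t) ≤ l ^ d * weightCount d γ t := by
  have hl' : (0 : ℝ) < l := by exact_mod_cast hl
  have hquot (m : weightBelow d γ (l * t)) : (fun i => m.1 i / l) ∈ weightBelow d γ t := by
    have hle : weight d γ (fun i => m.1 i / l) ≤ weight d γ m / l := by
      rw [weight, weight, sum_div]
      refine sum_le_sum fun i _ => ?_
      rw [mul_div_right_comm]
      exact mul_le_mul_of_nonneg_right Nat.cast_div_le (hγ i).le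
    exact hle.trans_lt ((div_lt_iff₀' hl').2 m.2)
  have := (weightBelow_finite hγ t).to_subtype
  have hinj : Function.Injective fun m : weightBelow d γ (l * t) => ((⟨_, hquot m⟩ :
      weightBelow d γ t), fun i => (⟨m.1 i % l, Nat.mod_lt _ hl⟩ : Fin l)) := by
    rintro ⟨a, ha⟩ ⟨b, hb⟩ hab
    simp only [Prod.mk.injEq, Subtype.mk.injEq, funext_iff, Fin.ext_iff] at hab
    refine Subtype.ext (funext fun i => ?_)
    show a i = b i
    rw [← Nat.div_add_mod (a i) l, ← Nat.div_add_mod (b i) l, hab.1 i, hab.2 i]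
  have := Nat.card_le_card_of_injective _ hinj
  rw [Nat.card_prod, Nat.card_coe_set_eq, Nat.card_coe_set_eq, Nat.card_fun, Nat.card_fin,
    Nat.card_fin] at this
  rw [weightCount, weightCount, mul_comm (l ^ d)]
  exact this

theorem exists_pos_mul_pow_le_weightCount (hγ : ∀ i, 0 < γ i) :
    ∃ c > 0, ∀ t > 0, c * t ^ d ≤ weightCount d γ t := by
  have hG : 0 < ∑ i, γ i + 1 :=
    add_pos_of_nonneg_of_pos (sum_nonneg fun i _ => (hγ i).le) one_pos
  refine ⟨(∑ i, γ i + 1)⁻¹ ^ d, by positivity, fun t ht => ?_⟩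
  set x := t / (∑ i, γ i + 1)
  have hbox (m : Fin d → Fin ⌈x⌉₊) : (fun i => (m i : ℕ)) ∈ weightBelow d γ t := by
    have hmx (i : Fin d) : ((m i : ℕ) : ℝ) ≤ x := (Nat.lt_ceil.1 (m i).2).le
    calc weight d γ (fun i => (m i : ℕ)) ≤ ∑ i, x * γ i :=
          sum_le_sum fun i _ => mul_le_mul_of_nonneg_right (hmx i) (hγ i).le
      _ < x * (∑ i, γ i + 1) := by rw [← mul_sum]; linarith [div_pos ht hG]
      _ = t := div_mul_cancel₀ _ hG.ne'
  have := (weightBelow_finite hγ t).to_subtype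
  have hinj :
      Function.Injective fun m : Fin d → Fin ⌈x⌉₊ => (⟨_, hbox m⟩ : weightBelow d γ t) :=
    fun a b hab => funext fun i => Fin.ext (congrFun (Subtype.ext_iff.1 hab) i)
  have hcard := Nat.card_le_card_of_injective _ hinj
  rw [Nat.card_fun, Nat.card_fin, Nat.card_fin, Nat.card_coe_set_eq] at hcard
  calc (∑ i, γ i + 1)⁻¹ ^ d * t ^ d = x ^ d := by rw [← mul_pow, inv_mul_eq_div]
    _ ≤ (⌈x⌉₊ : ℝ) ^ d := by gcongr; exact Nat.le_ceil x
    _ ≤ weightCount d γ t := by exact_mod_cast hcard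

end WeightCount

open Filter in
theorem stmt_5_general (d : ℕ) (γ : Fin d → ℝ) (hγ : ∀ i, 0 < γ i) :
    Tendsto (fun n : ℕ => hratio d γ n) atTop (nhds ((d : ℝ) / (d + 1))) := by
  obtain ⟨C, hC⟩ := exists_tendsto_div_pow_of_le_pow_mul
    (f := fun n => (weightCount d γ n : ℝ)) (d := d) (fun n => Nat.cast_nonneg _)
    (fun s t hst => Nat.cast_le.2 (weightCount_mono hγ (Nat.cast_le.2 hst)))
    (fun l t hl => by push_cast; exact_mod_cast weightCount_natCast_mul_le hγ hl t)
  obtain ⟨c, hc, hcN⟩ := exists_pos_mul_pow_le_weightCount hγ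
  have hCpos : 0 < C := hc.trans_le <| ge_of_tendsto hC <| (eventually_gt_atTop 0).mono
    fun n hn => (le_div_iff₀ (by positivity)).2 (hcN n (by positivity))
  have hH : Tendsto
      (fun n : ℕ => (∑ j ∈ range (n + 1), (hcount d γ j : ℝ)) / (n : ℝ) ^ d) atTop (𝓝 C) := by
    simpa [← Nat.cast_sum, sum_range_hcount hγ] using tendsto_comp_succ_div_pow hC
  exact tendsto_sum_range_succ_natCast_mul_div hH hCpos.ne'

open Filter in
theorem stmt_5 (d : ℕ) (hd : 1 ≤ d) (γ : Fin d → ℝ) (hγ : ∀ i, 0 < γ i) :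
    Tendsto (fun n : ℕ => hratio d γ n) atTop (nhds ((d : ℝ) / (d + 1))) :=
  stmt_5_general d γ hγ
end

section
/- Let d ≥ 1 and let γ = (γ_1,…,γ_d) be a vector of positive integers (each γ_i ≥ 1), and for j ∈ ℕ let h_j := #{m ∈ ℕ^d | m·γ = j} (the Hilbert function of ℂ[X_1,…,X_d] graded by deg X_i = γ_i). Then for every n > 0 with Σ_{j=0}^n (n-j)·h_j ≠ 0, the quantity (Σ_{j=0}^n j·h_j)/(Σ_{j=0}^n (n-j)·h_j) = (n·Σ_{j=0}^n h_j)/(Σ_{j=0}^n (n-j)·h_j) − 1 is at most d, and it converges to d as n → ∞. -/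
/-- `h_j = #{m ∈ ℕ^d | m·γ = j}`, the Hilbert function of `ℂ[X_1,…,X_d]` with the
grading `deg X_i = γ_i`. -/
noncomputable def hilb (d : ℕ) (γ : Fin d → ℕ) (j : ℕ) : ℕ :=
  Set.ncard {m : Fin d → ℕ | ∑ i, m i * γ i = j}

/-- The quotient `(Σ_{j=0}^n j·h_j) / (Σ_{j=0}^n (n-j)·h_j)`. -/
noncomputable def hilbQuot (d : ℕ) (γ : Fin d → ℕ) (n : ℕ) : ℝ :=
  (∑ j ∈ Finset.range (n + 1), (j : ℝ) * hilb d γ j) /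
    (∑ j ∈ Finset.range (n + 1), ((n - j : ℕ) : ℝ) * hilb d γ j)

/-!
Let `U_n` be the set of exponent vectors `m` of weighted degree `m·γ ≤ n`. Summing the Hilbert
function against `j`, `n - j` and `1` gives `S = Σ_{U_n} m·γ`, `T = Σ_{U_n} (n - m·γ)` and
`P = #U_n`, with `S + T = n P`. For each coordinate `i`, the map replacing `m_i` by
`⌊(n - m·γ)/γ_i⌋` is an involution of `U_n` (it reflects `m` within the segment of `U_n` through
`m` in direction `e_i`). Reindexing by it gives `Σ_{U_n} m_i γ_i ≤ T` and
`Σ_{U_n} (m_i + 1) γ_i ≥ T + P`; summing over `i` yields `S ≤ d T ≤ S + (Σ γ_i) P`.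
Hence `S / T ≤ d`, and since `T ≥ n` and `n P ≤ (d + 1) T`, also `S / T ≥ d - (Σ γ_i)(d + 1)/n`.
-/

open Finset

section Monomials

variable {d : ℕ} (γ : Fin d → ℕ)

def wdeg (m : Fin d → ℕ) : ℕ := ∑ i, m i * γ i

def monomialsUpTo (n : ℕ) : Finset (Fin d → ℕ) :=
  (Fintype.piFinset fun _ => range (n + 1)).filter fun m => wdeg γ m ≤ n

lemma mul_le_wdeg (m : Fin d → ℕ) (i : Fin d) : m i * γ i ≤ wdeg γ m :=
  single_le_sum (f := fun j => m j * γ j) (fun _ _ => Nat.zero_le _) (mem_univ i)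

lemma wdeg_update_add (m : Fin d → ℕ) (i : Fin d) (c : ℕ) :
    wdeg γ (Function.update m i c) + m i * γ i = wdeg γ m + c * γ i := by
  have hsplit : ∀ f : Fin d → ℕ, wdeg γ f = f i * γ i + ∑ j ∈ univ.erase i, f j * γ j :=
    fun f => (add_sum_erase _ _ (mem_univ i)).symm
  rw [hsplit, hsplit m, Function.update_self,
    sum_congr rfl fun j hj => by rw [Function.update_of_ne (ne_of_mem_erase hj)]]
  ring

lemma mem_monomialsUpTo (hγ : ∀ i, 0 < γ i) {n : ℕ} {m : Fin d → ℕ} :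
    m ∈ monomialsUpTo γ n ↔ wdeg γ m ≤ n := by
  simp only [monomialsUpTo, mem_filter, Fintype.mem_piFinset, mem_range, and_iff_right_iff_imp]
  exact fun h i => Nat.lt_succ_of_le <|
    (Nat.le_mul_of_pos_right _ (hγ i)).trans ((mul_le_wdeg γ m i).trans h)

lemma le_sum_sub_wdeg (hγ : ∀ i, 0 < γ i) (n : ℕ) :
    n ≤ ∑ m ∈ monomialsUpTo γ n, (n - wdeg γ m) := by
  have hzero : wdeg γ 0 = 0 := by simp [wdeg]
  have h := single_le_sum (f := fun m => n - wdeg γ m) (fun _ _ => Nat.zero_le _)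
    ((mem_monomialsUpTo γ hγ).2 (hzero ▸ Nat.zero_le n))
  rwa [hzero, Nat.sub_zero] at h

def segmentReflect (n : ℕ) (i : Fin d) (m : Fin d → ℕ) : Fin d → ℕ :=
  Function.update m i ((n - wdeg γ m) / γ i)

variable {γ} {n : ℕ} {m : Fin d → ℕ}

lemma sub_wdeg_segmentReflect (hm : wdeg γ m ≤ n) (i : Fin d) :
    n - wdeg γ (segmentReflect γ n i m) = (n - wdeg γ m) % γ i + m i * γ i := by
  have hupd := wdeg_update_add γ m i ((n - wdeg γ m) / γ i)
  have hdiv := Nat.div_add_mod' (n - wdeg γ m) (γ i)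
  have hle := mul_le_wdeg γ m i
  rw [segmentReflect]
  omega

lemma wdeg_segmentReflect_le (hm : wdeg γ m ≤ n) (i : Fin d) :
    wdeg γ (segmentReflect γ n i m) ≤ n := by
  have hupd := wdeg_update_add γ m i ((n - wdeg γ m) / γ i)
  have hdiv := Nat.div_mul_le_self (n - wdeg γ m) (γ i)
  rw [segmentReflect]
  omega

lemma sub_wdeg_segmentReflect_div (hγ : ∀ i, 0 < γ i) (hm : wdeg γ m ≤ n) (i : Fin d) :
    (n - wdeg γ (segmentReflect γ n i m)) / γ i = m i := by
  rw [sub_wdeg_segmentReflect hm, Nat.add_mul_div_right _ _ (hγ i),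
    Nat.div_eq_of_lt (Nat.mod_lt _ (hγ i)), zero_add]

lemma segmentReflect_segmentReflect (hγ : ∀ i, 0 < γ i) (hm : wdeg γ m ≤ n) (i : Fin d) :
    segmentReflect γ n i (segmentReflect γ n i m) = m := by
  rw [segmentReflect, sub_wdeg_segmentReflect_div hγ hm, segmentReflect, Function.update_idem,
    Function.update_eq_self]

variable (γ)

lemma sum_comp_eq_sum_comp_div {M : Type*} [AddCommMonoid M] (hγ : ∀ i, 0 < γ i) (n : ℕ)
    (i : Fin d) (f : ℕ → M) :
    ∑ m ∈ monomialsUpTo γ n, f (m i) = ∑ m ∈ monomialsUpTo γ n, f ((n - wdeg γ m) / γ i) := by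
  have hmem := fun {m} => mem_monomialsUpTo γ hγ (n := n) (m := m)
  refine sum_nbij' (segmentReflect γ n i) (segmentReflect γ n i)
    (fun m hm => hmem.2 (wdeg_segmentReflect_le (hmem.1 hm) i))
    (fun m hm => hmem.2 (wdeg_segmentReflect_le (hmem.1 hm) i))
    (fun m hm => segmentReflect_segmentReflect hγ (hmem.1 hm) i)
    (fun m hm => segmentReflect_segmentReflect hγ (hmem.1 hm) i) fun m hm => ?_
  rw [sub_wdeg_segmentReflect_div hγ (hmem.1 hm)]

lemma sum_mul_le_sum_sub_wdeg (hγ : ∀ i, 0 < γ i) (n : ℕ) (i : Fin d) :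
    ∑ m ∈ monomialsUpTo γ n, m i * γ i ≤ ∑ m ∈ monomialsUpTo γ n, (n - wdeg γ m) := by
  rw [sum_comp_eq_sum_comp_div γ hγ n i (· * γ i)]
  exact sum_le_sum fun m _ => Nat.div_mul_le_self _ _

lemma sum_succ_sub_wdeg_le_sum_mul (hγ : ∀ i, 0 < γ i) (n : ℕ) (i : Fin d) :
    ∑ m ∈ monomialsUpTo γ n, (n + 1 - wdeg γ m) ≤ ∑ m ∈ monomialsUpTo γ n, (m i + 1) * γ i := by
  rw [sum_comp_eq_sum_comp_div γ hγ n i (fun k => (k + 1) * γ i)]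
  refine sum_le_sum fun m _ => ?_
  have hlt := Nat.lt_div_mul_add (a := n - wdeg γ m) (hγ i)
  rw [add_one_mul]
  omega

lemma sum_wdeg_le (hγ : ∀ i, 0 < γ i) (n : ℕ) :
    ∑ m ∈ monomialsUpTo γ n, wdeg γ m ≤ d * ∑ m ∈ monomialsUpTo γ n, (n - wdeg γ m) :=
  calc ∑ m ∈ monomialsUpTo γ n, wdeg γ m = ∑ i, ∑ m ∈ monomialsUpTo γ n, m i * γ i := sum_comm
    _ ≤ ∑ _i : Fin d, ∑ m ∈ monomialsUpTo γ n, (n - wdeg γ m) :=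
      sum_le_sum fun i _ => sum_mul_le_sum_sub_wdeg γ hγ n i
    _ = d * ∑ m ∈ monomialsUpTo γ n, (n - wdeg γ m) := by simp

lemma mul_sum_sub_wdeg_le (hγ : ∀ i, 0 < γ i) (n : ℕ) :
    d * ∑ m ∈ monomialsUpTo γ n, (n - wdeg γ m) ≤
      ∑ m ∈ monomialsUpTo γ n, wdeg γ m + (∑ i, γ i) * #(monomialsUpTo γ n) :=
  calc d * ∑ m ∈ monomialsUpTo γ n, (n - wdeg γ m)
      ≤ d * ∑ m ∈ monomialsUpTo γ n, (n + 1 - wdeg γ m) := by gcongr; omega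
    _ = ∑ _i : Fin d, ∑ m ∈ monomialsUpTo γ n, (n + 1 - wdeg γ m) := by simp
    _ ≤ ∑ i, ∑ m ∈ monomialsUpTo γ n, (m i + 1) * γ i :=
      sum_le_sum fun i _ => sum_succ_sub_wdeg_le_sum_mul γ hγ n i
    _ = ∑ m ∈ monomialsUpTo γ n, wdeg γ m + (∑ i, γ i) * #(monomialsUpTo γ n) := by
      rw [sum_comm, mul_comm, ← smul_eq_mul, ← sum_const, ← sum_add_distrib]
      simp only [wdeg, add_one_mul, sum_add_distrib]

lemma hilb_eq_card_filter (hγ : ∀ i, 0 < γ i) {n j : ℕ} (hj : j ≤ n) :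
    hilb d γ j = #((monomialsUpTo γ n).filter fun m => wdeg γ m = j) := by
  rw [hilb, ← Set.ncard_coe_finset]
  congr 1
  ext m
  simp only [coe_filter, mem_monomialsUpTo γ hγ, Set.mem_ofPred_eq]
  exact ⟨fun h => ⟨(show wdeg γ m = j from h) ▸ hj, h⟩, And.right⟩

lemma sum_mul_hilb (hγ : ∀ i, 0 < γ i) (n : ℕ) (c : ℕ → ℕ) :
    ∑ j ∈ range (n + 1), c j * hilb d γ j = ∑ m ∈ monomialsUpTo γ n, c (wdeg γ m) := by
  rw [← sum_fiberwise_of_maps_to (t := range (n + 1)) (g := wdeg γ)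
    fun m hm => mem_range_succ_iff.2 ((mem_monomialsUpTo γ hγ).1 hm)]
  refine sum_congr rfl fun j hj => ?_
  rw [hilb_eq_card_filter γ hγ (mem_range_succ_iff.1 hj), sum_congr rfl fun m hm => by
    rw [(mem_filter.1 hm).2], sum_const, smul_eq_mul, mul_comm]

end Monomials

section Ratio

variable {d : ℕ} (γ : Fin d → ℕ)

lemma sum_mul_hilb_add_sum_sub_mul_hilb (n : ℕ) :
    ∑ j ∈ range (n + 1), j * hilb d γ j + ∑ j ∈ range (n + 1), (n - j) * hilb d γ j =
      n * ∑ j ∈ range (n + 1), hilb d γ j := by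
  rw [← sum_add_distrib, mul_sum]
  refine sum_congr rfl fun j hj => ?_
  rw [← add_mul, Nat.add_sub_cancel' (mem_range_succ_iff.1 hj)]

lemma sum_mul_hilb_le (hγ : ∀ i, 0 < γ i) (n : ℕ) :
    ∑ j ∈ range (n + 1), j * hilb d γ j ≤ d * ∑ j ∈ range (n + 1), (n - j) * hilb d γ j := by
  rw [sum_mul_hilb γ hγ n (fun j => j), sum_mul_hilb γ hγ n (fun j => n - j)]
  exact sum_wdeg_le γ hγ n

lemma mul_sum_sub_mul_hilb_le (hγ : ∀ i, 0 < γ i) (n : ℕ) :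
    d * ∑ j ∈ range (n + 1), (n - j) * hilb d γ j ≤
      ∑ j ∈ range (n + 1), j * hilb d γ j + (∑ i, γ i) * ∑ j ∈ range (n + 1), hilb d γ j := by
  have hcard := sum_mul_hilb γ hγ n fun _ => 1
  simp only [one_mul, sum_const, smul_eq_mul, mul_one] at hcard
  rw [sum_mul_hilb γ hγ n (fun j => j), sum_mul_hilb γ hγ n (fun j => n - j), hcard]
  exact mul_sum_sub_wdeg_le γ hγ n

lemma le_sum_sub_mul_hilb (hγ : ∀ i, 0 < γ i) (n : ℕ) :
    n ≤ ∑ j ∈ range (n + 1), (n - j) * hilb d γ j := by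
  rw [sum_mul_hilb γ hγ n (fun j => n - j)]
  exact le_sum_sub_wdeg γ hγ n

lemma hilbQuot_eq_div (n : ℕ) :
    hilbQuot d γ n = ((∑ j ∈ range (n + 1), j * hilb d γ j : ℕ) : ℝ) /
      ((∑ j ∈ range (n + 1), (n - j) * hilb d γ j : ℕ) : ℝ) := by
  push_cast [hilbQuot]
  rfl

lemma hilbQuot_le (hγ : ∀ i, 0 < γ i) (n : ℕ) : hilbQuot d γ n ≤ d := by
  rw [hilbQuot_eq_div]
  exact div_le_of_le_mul₀ (Nat.cast_nonneg _) (Nat.cast_nonneg _)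
    (by exact_mod_cast sum_mul_hilb_le γ hγ n)

lemma sub_div_le_hilbQuot (hγ : ∀ i, 0 < γ i) {n : ℕ} (hn : 0 < n) :
    (d : ℝ) - (∑ i, γ i : ℕ) * (d + 1) / n ≤ hilbQuot d γ n := by
  have hupper := sum_mul_hilb_le γ hγ n
  have hlower := mul_sum_sub_mul_hilb_le γ hγ n
  have htotal := sum_mul_hilb_add_sum_sub_mul_hilb γ n
  have hT := le_sum_sub_mul_hilb γ hγ n
  rw [hilbQuot_eq_div]
  generalize ∑ j ∈ range (n + 1), j * hilb d γ j = S at *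
  generalize ∑ j ∈ range (n + 1), (n - j) * hilb d γ j = T at *
  generalize ∑ j ∈ range (n + 1), hilb d γ j = P at *
  generalize ∑ i, γ i = G at *
  have hTpos : (0 : ℝ) < T := by exact_mod_cast hn.trans_le hT
  have hnpos : (0 : ℝ) < n := by exact_mod_cast hn
  have hupper' : (S : ℝ) ≤ d * T := by exact_mod_cast hupper
  have hlower' : (d : ℝ) * T ≤ S + G * P := by exact_mod_cast hlower
  have htotal' : (S : ℝ) + T = n * P := by exact_mod_cast htotal
  rw [le_div_iff₀ hTpos, sub_mul, div_mul_eq_mul_div, sub_le_iff_le_add, ← sub_le_iff_le_add',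
    le_div_iff₀ hnpos]
  nlinarith [mul_le_mul_of_nonneg_left hlower' hnpos.le, Nat.cast_nonneg (α := ℝ) G]

end Ratio

open Filter in
theorem stmt_12_general (d : ℕ) (γ : Fin d → ℕ) (hγ : ∀ i, 0 < γ i) :
    (∀ n : ℕ, 0 < n →
      (∑ j ∈ Finset.range (n + 1), ((n - j : ℕ) : ℝ) * hilb d γ j) ≠ 0 →
        hilbQuot d γ n =
            (n * ∑ j ∈ Finset.range (n + 1), (hilb d γ j : ℝ)) /
              (∑ j ∈ Finset.range (n + 1), ((n - j : ℕ) : ℝ) * hilb d γ j) - 1 ∧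
          hilbQuot d γ n ≤ d) ∧
      Tendsto (fun n : ℕ => hilbQuot d γ n) atTop (nhds (d : ℝ)) := by
  refine ⟨fun n _ hT => ⟨?_, hilbQuot_le γ hγ n⟩, ?_⟩
  · have htotal : ((∑ j ∈ range (n + 1), j * hilb d γ j +
        ∑ j ∈ range (n + 1), (n - j) * hilb d γ j : ℕ) : ℝ) =
        ((n * ∑ j ∈ range (n + 1), hilb d γ j : ℕ) : ℝ) :=
      congrArg _ (sum_mul_hilb_add_sum_sub_mul_hilb γ n)
    push_cast at htotal hT ⊢
    rw [hilbQuot, eq_sub_iff_add_eq, div_add_one hT, ← htotal]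
  · have hlim : Tendsto (fun n : ℕ => (d : ℝ) - (∑ i, γ i : ℕ) * (d + 1) / n) atTop (nhds d) := by
      simpa using (tendsto_const_div_atTop_nhds_zero_nat ((∑ i, γ i : ℕ) * (d + 1) : ℝ)).const_sub
        (d : ℝ)
    refine tendsto_of_tendsto_of_tendsto_of_le_of_le' hlim tendsto_const_nhds ?_
      (Eventually.of_forall (hilbQuot_le γ hγ))
    filter_upwards [eventually_gt_atTop 0] with n hn using sub_div_le_hilbQuot γ hγ hn

open Filter in
theorem stmt_12 (d : ℕ) (hd : 1 ≤ d) (γ : Fin d → ℕ) (hγ : ∀ i, 0 < γ i) :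
    (∀ n : ℕ, 0 < n →
      (∑ j ∈ Finset.range (n + 1), ((n - j : ℕ) : ℝ) * hilb d γ j) ≠ 0 →
        hilbQuot d γ n =
            (n * ∑ j ∈ Finset.range (n + 1), (hilb d γ j : ℝ)) /
              (∑ j ∈ Finset.range (n + 1), ((n - j : ℕ) : ℝ) * hilb d γ j) - 1 ∧
          hilbQuot d γ n ≤ d) ∧
      Tendsto (fun n : ℕ => hilbQuot d γ n) atTop (nhds (d : ℝ)) :=
  stmt_12_general d γ hγ
end

section
/- Let d ≥ 1, let γ_1,…,γ_d be positive integers, and grade the polynomial ring ℂ[X_1,…,X_d] by deg X_i = γ_i. Let I ⊆ ℂ[X_1,…,X_d] be an ideal that is homogeneous with respect to this weighted grading and such that the quotient ℂ[X_1,…,X_d]/I is a finite-dimensional ℂ-vector space (I is Artinian). Let h_n denote the Hilbert function of ℂ[X_1,…,X_d]/I, i.e., h_n = dim_ℂ of the degree-n graded piece of the quotient. If h_m ≠ 0 and h_n = 0 for all n > m, then Σ_{j=0}^m j·h_j ≤ (d/(d+1))·m·Σ_{j=0}^m h_j. -/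
/-!
Fix a monomial order and call an exponent `a` standard if `X^a` is not congruent modulo `I` to a
combination of smaller monomials of the same weight. The images of the standard monomials of
weight `n` form a basis of the image of the degree-`n` polynomials in the quotient, so `h n`
counts standard exponents of weight `n`. Since the order is compatible with multiplication,
the standard exponents form a down-set `F ⊆ ℕ^d`, and by the vanishing of `h` all their weights
are at most `m`.

For such an `F` (Zhai): reflecting every line of `F` in direction `i` (`a i ↦ top - a i`) is an
involution of `F`, and the weight of `a` plus `γ i` times the reflected `i`-th coordinate is the
weight of the top of the line, hence at most `m`. Summing over `a ∈ F` and over the `d`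
directions gives `(d + 1) ∑ weight ≤ d m |F|`.
-/

open Finset

namespace Finsupp

variable {ι : Type*}

theorem weight_update_add (w : ι → ℕ) (a : ι →₀ ℕ) (i : ι) (k : ℕ) :
    weight w (a.update i k) + a i * w i = weight w a + k * w i := by
  conv_rhs => rw [← erase_add_single i a]
  simp only [update_eq_erase_add_single, map_add, weight_single, smul_eq_mul]
  ring

theorem update_mono {M : Type*} [Zero M] [Preorder M] (a : ι →₀ M) (i : ι) :
    Monotone (a.update i) := by
  classical
  intro x y hxy j
  simp only [coe_update, Function.update_apply]
  split_ifs <;> simp [hxy]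

end Finsupp

namespace Finset

theorem sum_range_mul_card_filter_eq {α : Type*} {s : Finset α} {f : α → ℕ} {m : ℕ}
    (hf : ∀ a ∈ s, f a ≤ m) :
    ∑ j ∈ range (m + 1), j * #{a ∈ s | f a = j} = ∑ a ∈ s, f a := by
  rw [← sum_fiberwise_of_maps_to (g := f) (t := range (m + 1))
    fun a ha => mem_range_succ_iff.2 (hf a ha)]
  refine sum_congr rfl fun j _ => ?_
  rw [sum_congr rfl fun a ha => (mem_filter.1 ha).2, sum_const, smul_eq_mul, mul_comm]

variable {ι : Type*} [DecidableEq ι] (F : Finset (ι →₀ ℕ)) (i : ι)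

noncomputable def lineTop (a : ι →₀ ℕ) : ℕ :=
  {b ∈ F | b.erase i = a.erase i}.sup (· i)

noncomputable def lineReflect (a : ι →₀ ℕ) : ι →₀ ℕ :=
  a.update i (F.lineTop i a - a i)

variable {F i} {a : ι →₀ ℕ}

@[simp]
theorem lineTop_update (k : ℕ) : F.lineTop i (a.update i k) = F.lineTop i a := by
  simp [lineTop]

theorem le_lineTop (ha : a ∈ F) : a i ≤ F.lineTop i a :=
  le_sup (f := (· i)) (s := {b ∈ F | b.erase i = a.erase i}) (mem_filter.2 ⟨ha, rfl⟩)

theorem update_lineTop_mem (ha : a ∈ F) : a.update i (F.lineTop i a) ∈ F := by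
  obtain ⟨b, hb, hba⟩ := exists_mem_eq_sup {b ∈ F | b.erase i = a.erase i}
    ⟨a, mem_filter.2 ⟨ha, rfl⟩⟩ (· i)
  rw [mem_filter] at hb
  rw [lineTop, hba, Finsupp.update_eq_erase_add_single, ← hb.2, Finsupp.erase_add_single]
  exact hb.1

@[simp]
theorem lineReflect_apply_self : F.lineReflect i a i = F.lineTop i a - a i := by
  simp [lineReflect]

theorem lineReflect_mem (hF : IsLowerSet (F : Set (ι →₀ ℕ))) (ha : a ∈ F) :
    F.lineReflect i a ∈ F :=
  hF (Finsupp.update_mono a i (Nat.sub_le _ _)) (update_lineTop_mem ha)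

theorem lineReflect_lineReflect (ha : a ∈ F) : F.lineReflect i (F.lineReflect i a) = a := by
  rw [lineReflect, lineReflect_apply_self, lineReflect, lineTop_update, Finsupp.update_idem,
    Nat.sub_sub_self (le_lineTop ha), Finsupp.update_self]

theorem lineReflect_apply_mul_add_weight (w : ι → ℕ) (ha : a ∈ F) :
    F.lineReflect i a i * w i + Finsupp.weight w a =
      Finsupp.weight w (a.update i (F.lineTop i a)) := by
  have hupdate := Finsupp.weight_update_add w a i (F.lineTop i a)
  have hle := Nat.mul_le_mul_right (w i) (le_lineTop (i := i) ha)
  rw [lineReflect_apply_self, Nat.sub_mul]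
  omega

theorem sum_apply_mul_add_sum_weight_le (hF : IsLowerSet (F : Set (ι →₀ ℕ))) (w : ι → ℕ)
    {m : ℕ} (hm : ∀ a ∈ F, Finsupp.weight w a ≤ m) (i : ι) :
    ∑ a ∈ F, a i * w i + ∑ a ∈ F, Finsupp.weight w a ≤ #F * m := by
  have hreflect : ∑ a ∈ F, a i * w i = ∑ a ∈ F, F.lineReflect i a i * w i :=
    sum_nbij' (F.lineReflect i) (F.lineReflect i) (fun _ => lineReflect_mem hF)
      (fun _ => lineReflect_mem hF) (fun _ => lineReflect_lineReflect)
      (fun _ => lineReflect_lineReflect) (fun _ ha => by rw [lineReflect_lineReflect ha])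
  calc ∑ a ∈ F, a i * w i + ∑ a ∈ F, Finsupp.weight w a
      = ∑ a ∈ F, (F.lineReflect i a i * w i + Finsupp.weight w a) := by
        rw [hreflect, sum_add_distrib]
    _ ≤ ∑ _a ∈ F, m := sum_le_sum fun a ha => by
        rw [lineReflect_apply_mul_add_weight w ha]
        exact hm _ (update_lineTop_mem ha)
    _ = #F * m := by rw [sum_const, smul_eq_mul]

theorem card_add_one_mul_sum_weight_le [Fintype ι] (hF : IsLowerSet (F : Set (ι →₀ ℕ)))
    (w : ι → ℕ) {m : ℕ} (hm : ∀ a ∈ F, Finsupp.weight w a ≤ m) :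
    (Fintype.card ι + 1) * ∑ a ∈ F, Finsupp.weight w a ≤ Fintype.card ι * (#F * m) := by
  have hcoord := sum_le_sum fun i (_ : i ∈ univ) => sum_apply_mul_add_sum_weight_le hF w hm i
  have hweight : ∑ i, ∑ a ∈ F, a i * w i = ∑ a ∈ F, Finsupp.weight w a := by
    rw [sum_comm]
    simp [Finsupp.weight_eq_sum]
  rw [sum_add_distrib, hweight] at hcoord
  simp only [sum_const, card_univ, smul_eq_mul] at hcoord
  linarith

end Finset

open MvPolynomial Finsupp
open scoped MonomialOrder

namespace MvPolynomial

variable {σ K : Type*} [Field K] (ord : MonomialOrder σ) (w : σ → ℕ)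
  (I : Ideal (MvPolynomial σ K))

noncomputable def reducers (a : σ →₀ ℕ) : Submodule K (MvPolynomial σ K) :=
  I.restrictScalars K ⊔ restrictSupport K {b | weight w b = weight w a ∧ b ≺[ord] a}

def standardExponents : Set (σ →₀ ℕ) := {a | monomial a 1 ∉ reducers ord w I a}

variable {ord w I}

theorem monomial_add_mem_reducers {a : σ →₀ ℕ} (c : σ →₀ ℕ)
    (ha : monomial a 1 ∈ reducers ord w I a) :
    monomial (a + c) 1 ∈ reducers ord w I (a + c) := by
  have hmap : (reducers ord w I a).map (LinearMap.mulLeft K (monomial c 1)) ≤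
      reducers ord w I (a + c) := by
    rw [reducers, Submodule.map_sup, restrictSupport_eq_span, Submodule.map_span]
    refine sup_le_sup (fun _ ⟨p, hp, hpq⟩ => hpq ▸ I.mul_mem_left _ hp) ?_
    rw [Submodule.span_le, Set.image_image, Set.image_subset_iff]
    rintro b ⟨hwb, hba⟩
    simp only [Set.mem_preimage, LinearMap.mulLeft_apply, monomial_mul, one_mul, SetLike.mem_coe,
      monomial_mem_restrictSupport, one_ne_zero, or_false, Set.mem_ofPred_eq]
    rw [add_comm c b, map_add, map_add, hwb, map_add, map_add]
    exact ⟨rfl, add_lt_add_left hba _⟩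
  simpa [monomial_mul, add_comm c a] using hmap (Submodule.mem_map_of_mem ha)

theorem isLowerSet_standardExponents : IsLowerSet (standardExponents ord w I) := by
  intro a b hba ha hb
  obtain ⟨c, rfl⟩ := exists_add_of_le hba
  exact ha (monomial_add_mem_reducers c hb)

theorem eq_zero_of_mem_of_support_subset {n : ℕ} {p : MvPolynomial σ K} (hpI : p ∈ I)
    (hp : ↑p.support ⊆ {b ∈ standardExponents ord w I | weight w b = n}) : p = 0 := by
  by_contra hp0
  set a := ord.degree p
  have ha : a ∈ p.support := ord.degree_mem_support hp0
  have hc : coeff a p ≠ 0 := mem_support_iff.1 ha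
  have htail : p - monomial a (coeff a p) ∈
      restrictSupport K {b | weight w b = weight w a ∧ b ≺[ord] a} := by
    classical
    intro b hb
    replace hb : coeff b p - coeff b (monomial a (coeff a p)) ≠ 0 := by
      rwa [← coeff_sub, ← mem_support_iff]
    have hba : b ≠ a := by rintro rfl; simp at hb
    have hbp : b ∈ p.support := by simpa [coeff_monomial, Ne.symm hba] using hb
    refine ⟨(hp hbp).2.trans (hp ha).2.symm, ?_⟩
    exact lt_of_le_of_ne (ord.le_degree hbp) (ord.toSyn.injective.ne hba)
  have hmonomial : monomial a (1 : K) =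
      (coeff a p)⁻¹ • p - (coeff a p)⁻¹ • (p - monomial a (coeff a p)) := by
    rw [smul_sub, sub_sub_cancel, smul_monomial, smul_eq_mul, inv_mul_cancel₀ hc]
  refine (hp ha).1 ?_
  rw [hmonomial]
  exact sub_mem (Submodule.mem_sup_left (Submodule.smul_mem _ _ hpI))
    (Submodule.mem_sup_right (Submodule.smul_mem _ _ htail))

theorem linearIndepOn_mk_monomial (n : ℕ) :
    LinearIndepOn K (fun b => Ideal.Quotient.mkₐ K I (monomial b 1))
      {b ∈ standardExponents ord w I | weight w b = n} := by
  have hmon : LinearIndepOn K (fun b => monomial b (1 : K))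
      {b ∈ standardExponents ord w I | weight w b = n} := by
    rw [← coe_basisMonomials]
    exact (basisMonomials σ K).linearIndependent.linearIndepOn _
  refine hmon.map (f := (Ideal.Quotient.mkₐ K I).toLinearMap) ?_
  rw [← Set.image_eq_range (fun b => monomial b (1 : K)), ← restrictSupport_eq_span,
    Submodule.disjoint_def]
  intro p hp hpI
  exact eq_zero_of_mem_of_support_subset
    (by simpa [Ideal.Quotient.eq_zero_iff_mem] using hpI) hp

theorem mk_monomial_mem_span (a : σ →₀ ℕ) :
    Ideal.Quotient.mkₐ K I (monomial a 1) ∈ Submodule.span K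
      ((fun b => Ideal.Quotient.mkₐ K I (monomial b 1)) ''
        {b ∈ standardExponents ord w I | weight w b = weight w a}) := by
  induction a using (InvImage.wf ord.toSyn wellFounded_lt).induction with | _ a ih
  by_cases ha : a ∈ standardExponents ord w I
  · exact Submodule.subset_span ⟨a, ⟨ha, rfl⟩, rfl⟩
  have hmap :=
    Submodule.mem_map_of_mem (f := (Ideal.Quotient.mkₐ K I).toLinearMap) (not_not.1 ha)
  rw [reducers, Submodule.map_sup, restrictSupport_eq_span, Submodule.map_span] at hmap
  refine SetLike.le_def.1 (sup_le ?_ ?_) hmap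
  · rintro _ ⟨p, hp, rfl⟩
    simp [Ideal.Quotient.eq_zero_iff_mem.2 hp]
  · rw [Submodule.span_le, Set.image_image]
    rintro _ ⟨b, ⟨hwb, hba⟩, rfl⟩
    simpa [hwb] using ih b hba

variable (ord)

theorem map_weightedHomogeneousSubmodule_mk (n : ℕ) :
    (weightedHomogeneousSubmodule K w n).map (Ideal.Quotient.mkₐ K I).toLinearMap =
      Submodule.span K ((fun b => Ideal.Quotient.mkₐ K I (monomial b 1)) ''
        {b ∈ standardExponents ord w I | weight w b = n}) := by
  rw [weightedHomogeneousSubmodule_eq_finsupp_supported, ← restrictSupport,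
    restrictSupport_eq_span, Submodule.map_span, Set.image_image]
  apply le_antisymm
  · rw [Submodule.span_le]
    rintro _ ⟨a, rfl, rfl⟩
    exact mk_monomial_mem_span (ord := ord) a
  · exact Submodule.span_mono (Set.image_mono fun b hb => hb.2)

theorem finrank_map_weightedHomogeneousSubmodule_mk {n : ℕ}
    (hfin : {b ∈ standardExponents ord w I | weight w b = n}.Finite) :
    Module.finrank K
        ((weightedHomogeneousSubmodule K w n).map (Ideal.Quotient.mkₐ K I).toLinearMap) =
      {b ∈ standardExponents ord w I | weight w b = n}.ncard := by
  have := hfin.fintype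
  rw [map_weightedHomogeneousSubmodule_mk ord, Set.image_eq_range,
    finrank_span_eq_card (linearIndepOn_mk_monomial n), Set.ncard_eq_toFinset_card',
    Set.toFinset_card]

end MvPolynomial

open MvPolynomial in
theorem stmt_13_general (d : ℕ) (γ : Fin d → ℕ) (hγ : ∀ i, 0 < γ i)
    (I : Ideal (MvPolynomial (Fin d) ℂ))
    (h : ℕ → ℕ)
    (hdef : ∀ n : ℕ, h n = Module.finrank ℂ
      ((weightedHomogeneousSubmodule ℂ γ n).map (Ideal.Quotient.mkₐ ℂ I).toLinearMap))
    (m : ℕ) (hvanish : ∀ n, m < n → h n = 0) :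
    (∑ j ∈ Finset.range (m + 1), (j : ℝ) * h j) ≤
      (d / (d + 1)) * m * ∑ j ∈ Finset.range (m + 1), (h j : ℝ) := by
  set S := standardExponents MonomialOrder.lex γ I
  have hγ0 : ∀ i, γ i ≠ 0 := fun i => (hγ i).ne'
  have hfin (n : ℕ) : {b ∈ S | weight γ b = n}.Finite :=
    (Finsupp.finite_of_nat_weight_eq γ hγ0 n).subset fun _ hb => hb.2
  have hncard (n : ℕ) : h n = {b ∈ S | weight γ b = n}.ncard :=
    (hdef n).trans (finrank_map_weightedHomogeneousSubmodule_mk _ (hfin n))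
  have hS : ∀ a ∈ S, weight γ a ≤ m := by
    intro a ha
    by_contra! hlt
    have hempty := hvanish _ hlt
    rw [hncard, Set.ncard_eq_zero (hfin _)] at hempty
    exact Set.eq_empty_iff_forall_notMem.1 hempty a ⟨ha, rfl⟩
  set B := ((Finsupp.finite_of_nat_weight_le γ hγ0 m).subset hS).toFinset
  have hB : ∀ a ∈ B, weight γ a ≤ m := by simpa [B] using hS
  have hcard (n : ℕ) : h n = #{a ∈ B | weight γ a = n} := by
    rw [hncard, ← Set.ncard_coe_finset]
    congr 1
    ext; simp [B]
  have hzhai := card_add_one_mul_sum_weight_le (F := B)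
    (by simpa [B] using isLowerSet_standardExponents) γ hB
  rw [← sum_range_mul_card_filter_eq hB,
    card_eq_sum_card_fiberwise fun a ha => mem_range_succ_iff.2 (hB a ha),
    Fintype.card_fin] at hzhai
  simp only [← hcard] at hzhai
  have hzhaiℝ : ((d : ℝ) + 1) * ∑ j ∈ range (m + 1), (j : ℝ) * h j ≤
      d * ((∑ j ∈ range (m + 1), (h j : ℝ)) * m) := by
    exact_mod_cast hzhai
  rw [div_mul_eq_mul_div, div_mul_eq_mul_div, le_div_iff₀ (by positivity)]
  linarith

open MvPolynomial in
/-- The Hilbert function of the quotient of a weighted-graded polynomial ring by a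
weighted-homogeneous Artinian ideal satisfies Macaulay–Zhai's inequality. -/
theorem stmt_13 (d : ℕ) (hd : 1 ≤ d) (γ : Fin d → ℕ) (hγ : ∀ i, 0 < γ i)
    (I : Ideal (MvPolynomial (Fin d) ℂ))
    (hhom : ∀ p ∈ I, ∀ n : ℕ, weightedHomogeneousComponent γ n p ∈ I)
    (hart : FiniteDimensional ℂ (MvPolynomial (Fin d) ℂ ⧸ I))
    (h : ℕ → ℕ)
    (hdef : ∀ n : ℕ, h n = Module.finrank ℂ
      ((weightedHomogeneousSubmodule ℂ γ n).map (Ideal.Quotient.mkₐ ℂ I).toLinearMap))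
    (m : ℕ) (hm : h m ≠ 0) (hvanish : ∀ n, m < n → h n = 0) :
    (∑ j ∈ Finset.range (m + 1), (j : ℝ) * h j) ≤
      (d / (d + 1)) * m * ∑ j ∈ Finset.range (m + 1), (h j : ℝ) :=
  stmt_13_general d γ hγ I h hdef m hvanish
end

section
/- Let S be a numerical semigroup with minimal generators g_0 < g_1 < … < g_d, conductor c, genus Ω := #(ℕ \ S), n_0 := ⌈c/g_0⌉, ρ := n_0·g_0 − c, and Apéry set A := {s ∈ S | s − g_0 ∉ S}. For i ∈ ℕ set A_i := {a ∈ A | ⌊(a+ρ)/g_0⌋ = i}. If S is A-graded, i.e., (A_i + A_j) ∩ A ⊆ A_{i+j} for all i, j ∈ ℕ, then Wilf's inequality holds: Ω/c ≤ d/(d+1), i.e., (d+1)·Ω ≤ d·c. -/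
/-!
Write `m = g₀` and `lev a = ⌊(a + ρ) / m⌋`. The Apéry set `A` has exactly one element in each
residue class mod `m`, and the gaps are the numbers lying below the Apéry element of their class;
hence `Ω = ∑_{a ∈ A} ⌊a / m⌋` and, by Hermite's identity, `∑_{a ∈ A} lev a = Ω + ρ`.

Gradedness says that `lev` is additive on `A`. Writing `a ∈ A` as `∑ nⱼ gⱼ` with `j ≥ 1`, every
`a - i gⱼ` with `i ≤ nⱼ` is again in `A`, of level `lev a - i lev gⱼ`; as levels are at most `n₀`,
double counting gives `∑_{a} nⱼ(a) lev gⱼ ≤ ∑_{a} (n₀ - lev a) = c - Ω`. Summing over the `d`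
generators yields `Ω + ρ ≤ d (c - Ω)`, which is Wilf's inequality with `ρ` to spare.
-/

open Finset

def apery (S : AddSubmonoid ℕ) (m : ℕ) : Set ℕ := {s ∈ S | ∀ t ∈ S, s ≠ t + m}

-- Hermite's identity
theorem Nat.sum_range_add_div {m : ℕ} (hm : 0 < m) (n : ℕ) :
    ∑ r ∈ range m, (r + n) / m = n := by
  induction n with
  | zero => exact sum_eq_zero fun r hr => Nat.div_eq_of_lt (by simpa using hr)
  | succ n ih =>
    have h := (sum_range_succ (fun r => (r + n) / m) m).symm.trans
      (sum_range_succ' (fun r => (r + n) / m) m)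
    simp only [ih, zero_add, Nat.add_div_left n hm, add_right_comm _ 1 n] at h
    simp only [← add_assoc]
    omega

section Apery

variable {S : AddSubmonoid ℕ} {m c : ℕ}

theorem mem_apery_of_add_mem {x y : ℕ} (hx : x ∈ S) (hy : y ∈ S) (h : x + y ∈ apery S m) :
    x ∈ apery S m ∧ y ∈ apery S m :=
  ⟨⟨hx, fun t ht he => h.2 (t + y) (add_mem ht hy) (by omega)⟩,
    ⟨hy, fun t ht he => h.2 (x + t) (add_mem hx ht) (by omega)⟩⟩

theorem apery_le_of_modEq (hmS : m ∈ S) {a s : ℕ} (ha : a ∈ apery S m) (hs : s ∈ S)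
    (h : s ≡ a [MOD m]) : a ≤ s := by
  by_contra! hlt
  obtain ⟨_ | k, hk⟩ := (Nat.modEq_iff_dvd' hlt.le).mp h
  · omega
  · refine ha.2 (s + k • m) (add_mem hs (nsmul_mem hmS k)) ?_
    have : m * (k + 1) = k * m + m := by ring
    rw [smul_eq_mul]
    omega

theorem apery_eq_of_modEq (hmS : m ∈ S) {a b : ℕ} (ha : a ∈ apery S m) (hb : b ∈ apery S m)
    (h : a ≡ b [MOD m]) : a = b :=
  (apery_le_of_modEq hmS ha hb.1 h.symm).antisymm (apery_le_of_modEq hmS hb ha.1 h)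

theorem lt_add_of_mem_apery (hc : ∀ n, c ≤ n → n ∈ S) {a : ℕ} (ha : a ∈ apery S m) :
    a < c + m := by
  by_contra! h
  exact ha.2 (a - m) (hc _ (by omega)) (by omega)

theorem apery_finite (hc : ∀ n, c ≤ n → n ∈ S) : (apery S m).Finite :=
  (Set.finite_Iio (c + m)).subset fun _ => lt_add_of_mem_apery hc

theorem exists_mem_apery_modEq (hm : 0 < m) (hc : ∀ n, c ≤ n → n ∈ S) (r : ℕ) :
    ∃ a ∈ apery S m, a ≡ r [MOD m] := by
  classical
  have hex : ∃ s, s ∈ S ∧ s ≡ r [MOD m] :=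
    ⟨r + c * m, hc _ (le_add_left (Nat.le_mul_of_pos_right c hm)), Nat.add_mul_mod_self_right r c m⟩
  refine ⟨Nat.find hex, ⟨(Nat.find_spec hex).1, fun t ht he => ?_⟩, (Nat.find_spec hex).2⟩
  have htr : t ≡ r [MOD m] := (Nat.add_mod_right t m).symm.trans (he ▸ (Nat.find_spec hex).2)
  have := Nat.find_min' hex ⟨ht, htr⟩
  omega

theorem notMem_iff_exists_apery (hm : 0 < m) (hmS : m ∈ S) (hc : ∀ n, c ≤ n → n ∈ S) (x : ℕ) :
    x ∉ S ↔ ∃ a ∈ apery S m, x < a ∧ x ≡ a [MOD m] := by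
  constructor
  · intro hx
    obtain ⟨a, ha, hax⟩ := exists_mem_apery_modEq hm hc x
    refine ⟨a, ha, ?_, hax.symm⟩
    by_contra! hle
    obtain ⟨k, hk⟩ := (Nat.modEq_iff_dvd' hle).mp hax
    have hxa : x = a + k • m := by rw [smul_eq_mul, mul_comm]; omega
    exact hx (hxa ▸ add_mem ha.1 (nsmul_mem hmS k))
  · rintro ⟨a, ha, hxa, hmod⟩ hx
    exact absurd (apery_le_of_modEq hmS ha hx hmod) (by omega)

variable {A : Finset ℕ}

theorem sum_apery_mod (hm : 0 < m) (hmS : m ∈ S) (hc : ∀ n, c ≤ n → n ∈ S)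
    (hA : ↑A = apery S m) {M : Type*} [AddCommMonoid M] (f : ℕ → M) :
    ∑ a ∈ A, f (a % m) = ∑ r ∈ range m, f r := by
  refine sum_nbij (· % m) (fun a _ => mem_range.mpr (Nat.mod_lt a hm)) ?_ ?_ fun _ _ => rfl
  · intro a ha b hb hab
    exact apery_eq_of_modEq hmS (hA ▸ ha) (hA ▸ hb) hab
  · intro r hr
    obtain ⟨a, ha, har⟩ := exists_mem_apery_modEq hm hc r
    exact ⟨a, hA ▸ ha, Eq.trans har (Nat.mod_eq_of_lt (mem_range.mp hr))⟩

theorem card_apery (hm : 0 < m) (hmS : m ∈ S) (hc : ∀ n, c ≤ n → n ∈ S)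
    (hA : ↑A = apery S m) : #A = m := by
  rw [card_eq_sum_ones, sum_apery_mod hm hmS hc hA fun _ => 1, sum_const, card_range, smul_eq_mul,
    mul_one]

theorem ncard_compl_eq_sum_apery_div (hm : 0 < m) (hmS : m ∈ S) (hc : ∀ n, c ≤ n → n ∈ S)
    (hA : ↑A = apery S m) : (↑S : Set ℕ)ᶜ.ncard = ∑ a ∈ A, a / m := by
  classical
  have hgaps : (↑S : Set ℕ)ᶜ = ↑(A.biUnion fun a => (range a).filter (· ≡ a [MOD m])) := by
    ext x
    simp [notMem_iff_exists_apery hm hmS hc, ← hA, and_left_comm]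
  rw [hgaps, Set.ncard_coe_finset, card_biUnion]
  · refine sum_congr rfl fun a _ => ?_
    rw [← Nat.count_eq_card_filter_range, Nat.count_modEq_card _ hm]
    simp
  · intro a ha b hb hab
    refine disjoint_left.mpr fun x hxa hxb => hab ?_
    simp only [mem_filter] at hxa hxb
    exact apery_eq_of_modEq hmS (hA ▸ ha) (hA ▸ hb) (hxa.2.symm.trans hxb.2)

theorem sum_apery_add_div (hm : 0 < m) (hmS : m ∈ S) (hc : ∀ n, c ≤ n → n ∈ S)
    (hA : ↑A = apery S m) (ρ : ℕ) :
    ∑ a ∈ A, (a + ρ) / m = (↑S : Set ℕ)ᶜ.ncard + ρ := by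
  have hsplit : ∀ a, (a + ρ) / m = a / m + (a % m + ρ) / m := fun a => by
    conv_lhs => rw [← Nat.div_add_mod a m, add_assoc, Nat.mul_add_div hm]
  rw [sum_congr rfl fun a _ => hsplit a, sum_add_distrib,
    ← ncard_compl_eq_sum_apery_div hm hmS hc hA, sum_apery_mod hm hmS hc hA fun r => (r + ρ) / m,
    Nat.sum_range_add_div hm]

end Apery

section Additive

variable {S : AddSubmonoid ℕ} {m : ℕ} {f : ℕ → ℕ}
  (hf : ∀ x ∈ S, ∀ y ∈ S, x + y ∈ apery S m → f (x + y) = f x + f y)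
include hf

theorem map_zero_of_mem_apery (h : 0 ∈ apery S m) : f 0 = 0 := by
  simpa using hf 0 (zero_mem S) 0 (zero_mem S) h

theorem map_mul_of_mem_apery {x : ℕ} (hx : x ∈ S) :
    ∀ k, k * x ∈ apery S m → f (k * x) = k * f x
  | 0, h => by simpa using map_zero_of_mem_apery hf (by simpa using h)
  | k + 1, h => by
    have hkx : k * x ∈ S := by simpa using nsmul_mem hx k
    rw [add_one_mul] at h ⊢
    rw [hf _ hkx x hx h, add_one_mul,
      map_mul_of_mem_apery hx k (mem_apery_of_add_mem hkx hx h).1]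

theorem map_sum_mul_of_mem_apery {ι : Type*} (s : Finset ι) (n x : ι → ℕ)
    (hx : ∀ i ∈ s, x i ∈ S) (h : ∑ i ∈ s, n i * x i ∈ apery S m) :
    f (∑ i ∈ s, n i * x i) = ∑ i ∈ s, n i * f (x i) := by
  classical
  induction s using Finset.induction_on with
  | empty => simpa using map_zero_of_mem_apery hf (by simpa using h)
  | insert i s hi ih =>
    rw [sum_insert hi] at h ⊢
    rw [sum_insert hi]
    have hnx : n i * x i ∈ S := by simpa using nsmul_mem (hx i (mem_insert_self i s)) (n i)
    have hrest : ∑ j ∈ s, n j * x j ∈ S :=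
      sum_mem fun j hj => by simpa using nsmul_mem (hx j (mem_insert_of_mem hj)) (n j)
    obtain ⟨hnxA, hrestA⟩ := mem_apery_of_add_mem hnx hrest h
    rw [hf _ hnx _ hrest h, map_mul_of_mem_apery hf (hx i (mem_insert_self i s)) _ hnxA,
      ih (fun j hj => hx j (mem_insert_of_mem hj)) hrestA]

theorem sum_mul_le_sum_tsub {A : Finset ℕ} (hA : ↑A = apery S m) {N : ℕ}
    (hN : ∀ a ∈ A, f a ≤ N) {g : ℕ} (hg : g ∈ S) (k : ℕ → ℕ)
    (hk : ∀ a ∈ A, ∃ t ∈ S, a = t + k a * g) :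
    ∑ a ∈ A, k a * f g ≤ ∑ a ∈ A, (N - f a) := by
  have hstep : ∀ a ∈ A, ∀ i ≤ k a,
      i * g ≤ a ∧ a - i * g ∈ A ∧ f (a - i * g) + i * f g = f a := by
    intro a ha i hi
    obtain ⟨t, ht, hat⟩ := hk a ha
    have hu : t + (k a - i) * g ∈ S := add_mem ht (by simpa using nsmul_mem hg (k a - i))
    have hig : i * g ∈ S := by simpa using nsmul_mem hg i
    have hsplit : a = (t + (k a - i) * g) + i * g := by
      rw [add_assoc, ← add_mul, Nat.sub_add_cancel hi]
      exact hat
    have haA : (t + (k a - i) * g) + i * g ∈ apery S m := by rw [← hsplit, ← hA]; exact ha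
    obtain ⟨huA, higA⟩ := mem_apery_of_add_mem hu hig haA
    have hsub : a - i * g = t + (k a - i) * g := by omega
    refine ⟨by omega, by rw [hsub, ← mem_coe, hA]; exact huA, ?_⟩
    rw [hsub, ← map_mul_of_mem_apery hf hg i higA, ← hf _ hu _ hig haA, ← hsplit]
  -- `(a, v)` goes to `(b, v)` with `b = a - (⌊v / f g⌋ + 1) * g`,
  -- and then `v < (⌊v / f g⌋ + 1) * f g = f a - f b ≤ N - f b`
  calc ∑ a ∈ A, k a * f g = #(A.sigma fun a => range (k a * f g)) := by simp [card_sigma]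
    _ ≤ #(A.sigma fun b => range (N - f b)) := by
      refine card_le_card_of_injOn (fun p => ⟨p.1 - (p.2 / f g + 1) * g, p.2⟩) ?_ ?_
      · rintro ⟨a, v⟩ hav
        simp only [coe_sigma, Set.mem_sigma_iff, mem_coe, mem_range] at hav ⊢
        have hL : 0 < f g := Nat.pos_of_ne_zero fun h0 => by simp [h0] at hav
        have hi : v / f g + 1 ≤ k a := Nat.div_lt_iff_lt_mul hL |>.mpr hav.2
        obtain ⟨-, hbA, hlev⟩ := hstep a hav.1 _ hi
        have hv := Nat.lt_mul_div_succ v hL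
        have := hN a hav.1
        refine ⟨hbA, ?_⟩
        rw [mul_comm] at hv
        omega
      · rintro ⟨a, v⟩ hav ⟨a', v'⟩ hav' heq
        simp only [coe_sigma, Set.mem_sigma_iff, mem_coe, mem_range, Sigma.mk.inj_iff,
          heq_eq_eq] at hav hav' heq ⊢
        obtain ⟨heq, rfl⟩ := heq
        have hL : 0 < f g := Nat.pos_of_ne_zero fun h0 => by simp [h0] at hav
        have h1 := (hstep a hav.1 (v / f g + 1) (Nat.div_lt_iff_lt_mul hL |>.mpr hav.2)).1
        have h2 := (hstep a' hav'.1 (v / f g + 1) (Nat.div_lt_iff_lt_mul hL |>.mpr hav'.2)).1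
        exact ⟨by omega, rfl⟩
    _ = ∑ a ∈ A, (N - f a) := by simp [card_sigma]

end Additive

theorem exists_eq_sum_succ_of_mem_apery {d : ℕ} {g : Fin (d + 1) → ℕ} {a : ℕ}
    (ha : a ∈ apery (AddSubmonoid.closure (Set.range g)) (g 0)) :
    ∃ n : Fin d → ℕ, a = ∑ j, n j * g j.succ := by
  obtain ⟨n, hn⟩ := AddSubmonoid.mem_closure_range_iff_of_fintype.mp ha.1
  simp only [Fin.sum_univ_succ, smul_eq_mul] at hn
  have h0 : n 0 = 0 := by
    by_contra h
    have hgen : ∀ i, g i ∈ AddSubmonoid.closure (Set.range g) :=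
      fun i => AddSubmonoid.subset_closure (Set.mem_range_self i)
    refine ha.2 ((n 0 - 1) • g 0 + ∑ j : Fin d, n j.succ • g j.succ)
      (add_mem (nsmul_mem (hgen 0) _) (sum_mem fun j _ => nsmul_mem (hgen j.succ) _)) ?_
    have : n 0 * g 0 = (n 0 - 1) * g 0 + g 0 := by
      rw [← add_one_mul, Nat.sub_one_add_one h]
    simp only [smul_eq_mul, hn]
    omega
  exact ⟨fun j => n j.succ, by simpa [h0] using hn⟩

theorem wilf_of_level_additive {d : ℕ} {g : Fin (d + 1) → ℕ} (hm : 0 < g 0) {c n₀ ρ : ℕ}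
    (hc : ∀ n, c ≤ n → n ∈ AddSubmonoid.closure (Set.range g)) (hρ : n₀ * g 0 = c + ρ)
    (hlev : ∀ x ∈ AddSubmonoid.closure (Set.range g), ∀ y ∈ AddSubmonoid.closure (Set.range g),
      x + y ∈ apery (AddSubmonoid.closure (Set.range g)) (g 0) →
        (x + y + ρ) / g 0 = (x + ρ) / g 0 + (y + ρ) / g 0) :
    (d + 1) * (↑(AddSubmonoid.closure (Set.range g)) : Set ℕ)ᶜ.ncard ≤ d * c := by
  set S := AddSubmonoid.closure (Set.range g)
  set Ω := (↑S : Set ℕ)ᶜ.ncard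
  set lev : ℕ → ℕ := fun a => (a + ρ) / g 0
  have hmS : g 0 ∈ S := AddSubmonoid.subset_closure (Set.mem_range_self 0)
  set A := (apery_finite (m := g 0) hc).toFinset
  have hA : ↑A = apery S (g 0) := Set.Finite.coe_toFinset _
  have hmemA : ∀ {a}, a ∈ A → a ∈ apery S (g 0) := (Set.Finite.mem_toFinset _).mp
  choose! n hn using fun a (ha : a ∈ A) => exists_eq_sum_succ_of_mem_apery (hmemA ha)
  have hlev_le : ∀ a ∈ A, lev a ≤ n₀ := fun a ha => by
    have := lt_add_of_mem_apery hc (hmemA ha)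
    refine Nat.lt_succ_iff.mp ((Nat.div_lt_iff_lt_mul hm).mpr ?_)
    rw [Nat.succ_mul, hρ]
    omega
  have hsum_lev : ∑ a ∈ A, lev a = Ω + ρ := sum_apery_add_div hm hmS hc hA ρ
  have hsum_tsub : ∑ a ∈ A, (n₀ - lev a) + ∑ a ∈ A, lev a = c + ρ := by
    rw [← sum_add_distrib, sum_congr rfl fun a ha => Nat.sub_add_cancel (hlev_le a ha), sum_const,
      card_apery hm hmS hc hA, smul_eq_mul, mul_comm, hρ]
  have hgen : ∀ j : Fin d, g j.succ ∈ S :=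
    fun j => AddSubmonoid.subset_closure (Set.mem_range_self j.succ)
  have hlev_sum_le : ∑ a ∈ A, lev a ≤ d * ∑ a ∈ A, (n₀ - lev a) :=
    calc ∑ a ∈ A, lev a = ∑ j, ∑ a ∈ A, n a j * lev (g j.succ) := by
          rw [sum_comm]
          refine sum_congr rfl fun a ha => ?_
          have haA : ∑ j, n a j * g j.succ ∈ apery S (g 0) := hn a ha ▸ hmemA ha
          conv_lhs => rw [hn a ha]
          exact map_sum_mul_of_mem_apery (f := lev) hlev _ _ _ (fun j _ => hgen j) haA
      _ ≤ ∑ _j : Fin d, ∑ a ∈ A, (n₀ - lev a) := sum_le_sum fun j _ =>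
          sum_mul_le_sum_tsub (f := lev) hlev hA hlev_le (hgen j) (n · j) fun a ha =>
            ⟨∑ i ∈ univ.erase j, n a i * g i.succ,
              sum_mem fun i _ => by simpa using nsmul_mem (hgen i) (n a i),
              by rw [sum_erase_add _ _ (mem_univ j)]; exact hn a ha⟩
      _ = d * ∑ a ∈ A, (n₀ - lev a) := by simp
  nlinarith

theorem stmt_16_general (d : ℕ)
    -- `g 0 < g 1 < … < g d` is the minimal system of generators of `S`
    (g : Fin (d + 1) → ℕ) (hgpos : 0 < g 0)
    (S : Set ℕ) (hS : S = (AddSubmonoid.closure (Set.range g) : AddSubmonoid ℕ))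
    (hfin : (Set.univ \ S).Finite)
    -- `c` is the conductor, `Ω` the genus
    (c : ℕ) (hc : c = sInf {m : ℕ | ∀ n : ℕ, m ≤ n → n ∈ S})
    (Ω : ℕ) (hΩ : Ω = (Set.univ \ S).ncard)
    -- `n₀ = ⌈c/g₀⌉` and `ρ = n₀·g₀ - c`
    (n0 : ℕ) (hn0 : n0 = c ⌈/⌉ g 0)
    (ρ : ℕ) (hρ : ρ = n0 * g 0 - c)
    -- `A` is the Apéry set of `S` w.r.t. the multiplicity `g₀`, and `Ai i = {a ∈ A | ⌊(a+ρ)/g₀⌋ = i}`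
    (A : Set ℕ) (hA : A = {s ∈ S | ∀ t ∈ S, s ≠ t + g 0})
    (Ai : ℕ → Set ℕ) (hAi : ∀ i, Ai i = {a ∈ A | (a + ρ) / g 0 = i})
    -- `S` is `A`-graded
    (hgraded : ∀ i j : ℕ, ∀ a ∈ Ai i, ∀ b ∈ Ai j, a + b ∈ A → a + b ∈ Ai (i + j)) :
    (d + 1) * Ω ≤ d * c := by
  subst hS hΩ hA
  have hcond : ∀ n, c ≤ n → n ∈ AddSubmonoid.closure (Set.range g) := by
    obtain ⟨N, hN⟩ := hfin.bddAbove
    have hne : {m : ℕ | ∀ n, m ≤ n → n ∈ AddSubmonoid.closure (Set.range g)}.Nonempty :=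
      ⟨N + 1, fun n hn => by_contra fun h => absurd (hN ⟨trivial, h⟩) (by omega)⟩
    exact hc ▸ Nat.sInf_mem hne
  have hn0ρ : n0 * g 0 = c + ρ := by
    have := le_smul_ceilDiv (b := c) hgpos
    rw [smul_eq_mul, ← hn0, mul_comm] at this
    omega
  have hlev : ∀ x ∈ AddSubmonoid.closure (Set.range g), ∀ y ∈ AddSubmonoid.closure (Set.range g),
      x + y ∈ apery (AddSubmonoid.closure (Set.range g)) (g 0) →
        (x + y + ρ) / g 0 = (x + ρ) / g 0 + (y + ρ) / g 0 := by
    intro x hx y hy hxy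
    obtain ⟨hxA, hyA⟩ := mem_apery_of_add_mem hx hy hxy
    have := hgraded _ _ x (by rw [hAi]; exact ⟨hxA, rfl⟩) y (by rw [hAi]; exact ⟨hyA, rfl⟩) hxy
    rw [hAi] at this
    exact this.2
  rw [← Set.compl_eq_univ_sdiff]
  exact wilf_of_level_additive hgpos hcond hn0ρ hlev

theorem stmt_16 (d : ℕ) (hd : 1 ≤ d)
    -- `g 0 < g 1 < … < g d` is the minimal system of generators of `S`
    (g : Fin (d + 1) → ℕ) (hmono : StrictMono g) (hgpos : 0 < g 0)
    (S : Set ℕ) (hS : S = (AddSubmonoid.closure (Set.range g) : AddSubmonoid ℕ))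
    (hmin : ∀ i, g i ∉ (AddSubmonoid.closure (Set.range g \ {g i}) : AddSubmonoid ℕ))
    (hfin : (Set.univ \ S).Finite)
    -- `c` is the conductor, `Ω` the genus
    (c : ℕ) (hc : c = sInf {m : ℕ | ∀ n : ℕ, m ≤ n → n ∈ S})
    (Ω : ℕ) (hΩ : Ω = (Set.univ \ S).ncard)
    -- `n₀ = ⌈c/g₀⌉` and `ρ = n₀·g₀ - c`
    (n0 : ℕ) (hn0 : n0 = c ⌈/⌉ g 0)
    (ρ : ℕ) (hρ : ρ = n0 * g 0 - c)
    -- `A` is the Apéry set of `S` w.r.t. the multiplicity `g₀`, and `Ai i = {a ∈ A | ⌊(a+ρ)/g₀⌋ = i}`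
    (A : Set ℕ) (hA : A = {s ∈ S | ∀ t ∈ S, s ≠ t + g 0})
    (Ai : ℕ → Set ℕ) (hAi : ∀ i, Ai i = {a ∈ A | (a + ρ) / g 0 = i})
    -- `S` is `A`-graded
    (hgraded : ∀ i j : ℕ, ∀ a ∈ Ai i, ∀ b ∈ Ai j, a + b ∈ A → a + b ∈ Ai (i + j)) :
    (d + 1) * Ω ≤ d * c :=
  stmt_16_general d g hgpos S hS hfin c hc Ω hΩ n0 hn0 ρ hρ A hA Ai hAi hgraded
end

section
/- For every integer n ≥ 3, the numerical semigroup S generated by n², n²+1, n²+n, n²+n+1 is A-graded, and its conductor satisfies c = n_0·g_0 with g_0 = n² and n_0 = n−1, i.e., c = (n−1)·n². -/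
/-- The conductorN of `S ⊆ ℕ`: the smallest `m` such that every `n ≥ m` lies in `S`. -/
noncomputable def conductorN (S : Set ℕ) : ℕ :=
  sInf {m : ℕ | ∀ n : ℕ, m ≤ n → n ∈ S}

/-- The multiplicity of `S ⊆ ℕ`: its smallest positive element. -/
noncomputable def multiplicityN (S : Set ℕ) : ℕ :=
  sInf {s ∈ S | 0 < s}

/-- The Apéry set of `S` with respect to its multiplicity `g₀`:
elements `s ∈ S` with `s - g₀ ∉ S`. -/
def aperySet (S : Set ℕ) : Set ℕ :=
  {s ∈ S | ∀ t ∈ S, s ≠ t + multiplicityN S}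

/-- With `n₀ = ⌈c/g₀⌉` and `ρ = n₀·g₀ - c`, the piece
`A_i = {a ∈ A | ⌊(a+ρ)/g₀⌋ = i}` of the Apéry set. -/
noncomputable def aperyPiece (S : Set ℕ) (i : ℕ) : Set ℕ :=
  {a ∈ aperySet S |
    (a + ((conductorN S ⌈/⌉ multiplicityN S) * multiplicityN S - conductorN S)) /
      multiplicityN S = i}

/-- `S` is `A`-graded if `(A_i + A_j) ∩ A ⊆ A_{i+j}` for all `i, j ∈ ℕ`. -/
def IsAGraded (S : Set ℕ) : Prop :=
  ∀ i j : ℕ, ∀ a ∈ aperyPiece S i, ∀ b ∈ aperyPiece S j,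
    a + b ∈ aperySet S → a + b ∈ aperyPiece S (i + j)


/-! Every element of `⟨n², n²+1, n²+n, n²+n+1⟩` has the form `k·n² + b·n + a` with `a, b ≤ k`, and
every such number lies in it. Below `(n-1)·n²` these are the numbers whose base-`n` digits
`(k, b, a)` satisfy `a, b ≤ k`; so `(n-1)·n² - 1`, with digits `(n-2, n-1, n-1)`, is a gap, while every
larger number is represented. Hence `c = (n-1)·n²` is a multiple of `g₀ = n²` and `ρ = 0`. Apéry
elements are `< c + g₀ = n³`, so if `x = k·n² + b·n + a`, `y = l·n² + d·n + e` and `x + y` are Apéry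
elements then `k + l < n`, hence `a + e, b + d < n`: the sum has no carry in base `n` and
`⌊(x+y)/n²⌋ = k + l`. -/

lemma multiplicityN_eq_of_forall_le {S : Set ℕ} {g : ℕ} (hg : g ∈ S) (hg0 : 0 < g)
    (hle : ∀ s ∈ S, 0 < s → g ≤ s) : multiplicityN S = g :=
  IsLeast.csInf_eq ⟨⟨hg, hg0⟩, fun s hs ↦ hle s hs.1 hs.2⟩

lemma conductorN_eq_of_forall_mem {S : Set ℕ} {c : ℕ} (hge : ∀ m, c ≤ m → m ∈ S) (hc : c - 1 ∉ S) :
    conductorN S = c :=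
  IsLeast.csInf_eq ⟨hge, fun m hm ↦ by
    by_contra! hlt
    exact hc (hm _ (by omega))⟩

lemma lt_add_multiplicityN_of_mem_aperySet {S : Set ℕ} {c x : ℕ} (hge : ∀ m, c ≤ m → m ∈ S)
    (hx : x ∈ aperySet S) : x < c + multiplicityN S := by
  by_contra! hle
  exact hx.2 _ (hge _ (Nat.le_sub_of_add_le hle)) (Nat.sub_add_cancel (by omega)).symm

lemma isAGraded_of_dvd {S : Set ℕ} (hdvd : multiplicityN S ∣ conductorN S)
    (hadd : ∀ x ∈ aperySet S, ∀ y ∈ aperySet S, x + y ∈ aperySet S →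
      (x + y) / multiplicityN S = x / multiplicityN S + y / multiplicityN S) :
    IsAGraded S := by
  have hρ : (conductorN S ⌈/⌉ multiplicityN S) * multiplicityN S - conductorN S = 0 := by
    obtain ⟨q, hq⟩ := hdvd
    rcases Nat.eq_zero_or_pos (multiplicityN S) with h0 | hpos
    · simp [h0]
    · have hdiv : multiplicityN S * q ⌈/⌉ multiplicityN S = q := smul_ceilDiv hpos q
      rw [hq, hdiv, mul_comm, Nat.sub_self]
  rintro i j x ⟨hx, rfl⟩ y ⟨hy, rfl⟩ hxy
  refine ⟨hxy, ?_⟩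
  simp only [hρ, add_zero]
  exact hadd x hx y hy hxy

def quadSemigroup (n : ℕ) : AddSubmonoid ℕ :=
  AddSubmonoid.closure {n ^ 2, n ^ 2 + 1, n ^ 2 + n, n ^ 2 + n + 1}

namespace quadSemigroup

variable {n : ℕ}

lemma mem_iff {m : ℕ} :
    m ∈ quadSemigroup n ↔ ∃ k a b, a ≤ k ∧ b ≤ k ∧ m = k * n ^ 2 + b * n + a := by
  constructor
  · intro hm
    induction hm using AddSubmonoid.closure_induction with
    | mem x hx =>
      rcases hx with rfl | rfl | rfl | rfl
      · exact ⟨1, 0, 0, by omega, by omega, by ring⟩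
      · exact ⟨1, 1, 0, by omega, by omega, by ring⟩
      · exact ⟨1, 0, 1, by omega, by omega, by ring⟩
      · exact ⟨1, 1, 1, by omega, by omega, by ring⟩
    | zero => exact ⟨0, 0, 0, le_rfl, le_rfl, by ring⟩
    | add x y _ _ ihx ihy =>
      obtain ⟨k, a, b, ha, hb, rfl⟩ := ihx
      obtain ⟨k', a', b', ha', hb', rfl⟩ := ihy
      exact ⟨k + k', a + a', b + b', by omega, by omega, by ring⟩
  · rintro ⟨k, a, b, ha, hb, rfl⟩
    have hgen : ∀ g ∈ ({n ^ 2, n ^ 2 + 1, n ^ 2 + n, n ^ 2 + n + 1} : Set ℕ), ∀ j : ℕ,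
        j * g ∈ quadSemigroup n := fun g hg j ↦ by
      simpa [quadSemigroup] using nsmul_mem (AddSubmonoid.subset_closure hg) j
    rcases le_total a b with hab | hba
    · obtain ⟨u, rfl⟩ := Nat.exists_eq_add_of_le hab
      obtain ⟨v, rfl⟩ := Nat.exists_eq_add_of_le hb
      have hdecomp : (a + u + v) * n ^ 2 + (a + u) * n + a =
          a * (n ^ 2 + n + 1) + u * (n ^ 2 + n) + v * n ^ 2 := by ring
      rw [hdecomp]
      exact add_mem (add_mem (hgen _ (by simp) a) (hgen _ (by simp) u)) (hgen _ (by simp) v)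
    · obtain ⟨u, rfl⟩ := Nat.exists_eq_add_of_le hba
      obtain ⟨v, rfl⟩ := Nat.exists_eq_add_of_le ha
      have hdecomp : (b + u + v) * n ^ 2 + b * n + (b + u) =
          b * (n ^ 2 + n + 1) + u * (n ^ 2 + 1) + v * n ^ 2 := by ring
      rw [hdecomp]
      exact add_mem (add_mem (hgen _ (by simp) b) (hgen _ (by simp) u)) (hgen _ (by simp) v)

lemma div_sq_eq {k a b : ℕ} (ha : a < n) (hb : b < n) : (k * n ^ 2 + b * n + a) / n ^ 2 = k := by
  have : b * n + a < n ^ 2 := by nlinarith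
  rw [add_assoc, mul_comm, Nat.mul_add_div (by nlinarith), Nat.div_eq_of_lt this, add_zero]

lemma multiplicityN_eq (hn : 0 < n) : multiplicityN (quadSemigroup n) = n ^ 2 := by
  refine multiplicityN_eq_of_forall_le (mem_iff.2 ⟨1, 0, 0, by omega, by omega, by ring⟩)
    (by positivity) fun s hs hs0 ↦ ?_
  obtain ⟨k, a, b, ha, hb, rfl⟩ := mem_iff.1 hs
  have hk : 1 ≤ k := by
    by_contra! hk
    simp_all
  nlinarith

lemma mem_of_le (hn : 0 < n) {m : ℕ} (hm : (n - 1) * n ^ 2 ≤ m) : m ∈ quadSemigroup n := by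
  have hq : n - 1 ≤ m / n ^ 2 := (Nat.le_div_iff_mul_le (by positivity)).2 hm
  have ha : m % n ^ 2 % n < n := Nat.mod_lt _ hn
  have hb : m % n ^ 2 / n < n := Nat.div_lt_of_lt_mul (by nlinarith [Nat.mod_lt m (pow_pos hn 2)])
  refine mem_iff.2 ⟨m / n ^ 2, m % n ^ 2 % n, m % n ^ 2 / n, by omega, by omega, ?_⟩
  have e1 := Nat.div_add_mod m (n ^ 2)
  have e2 := Nat.div_add_mod (m % n ^ 2) n
  nlinarith

lemma sub_one_notMem (hn : 2 ≤ n) : (n - 1) * n ^ 2 - 1 ∉ quadSemigroup n := by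
  intro hm
  obtain ⟨k, a, b, ha, hb, he⟩ := mem_iff.1 hm
  obtain ⟨m, rfl⟩ : ∃ m, n = m + 2 := ⟨n - 2, by omega⟩
  rw [show m + 2 - 1 = m + 1 by omega] at he
  have hpos : 0 < (m + 1) * (m + 2) ^ 2 := by positivity
  have he' : k * (m + 2) ^ 2 + b * (m + 2) + a + 1 = (m + 1) * (m + 2) ^ 2 := by omega
  rcases le_or_gt (m + 1) k with hk | hk
  · nlinarith [Nat.mul_le_mul_right ((m + 2) ^ 2) hk]
  · nlinarith [Nat.mul_le_mul_right (m + 2) (show b ≤ m by omega),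
      Nat.mul_le_mul_right ((m + 2) ^ 2) (show k + 1 ≤ m + 1 by omega)]

lemma conductorN_eq (hn : 2 ≤ n) : conductorN (quadSemigroup n) = (n - 1) * n ^ 2 :=
  conductorN_eq_of_forall_mem (fun _ ↦ mem_of_le (by omega)) (sub_one_notMem hn)

lemma add_div_sq {x y : ℕ} (hx : x ∈ quadSemigroup n) (hy : y ∈ quadSemigroup n)
    (hxy : x + y < n * n ^ 2) : (x + y) / n ^ 2 = x / n ^ 2 + y / n ^ 2 := by
  obtain ⟨k, a, b, ha, hb, rfl⟩ := mem_iff.1 hx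
  obtain ⟨l, e, d, he, hd, rfl⟩ := mem_iff.1 hy
  have hkl : k + l < n := Nat.lt_of_mul_lt_mul_right (a := n ^ 2) (by nlinarith)
  have hsum : k * n ^ 2 + b * n + a + (l * n ^ 2 + d * n + e) =
      (k + l) * n ^ 2 + (b + d) * n + (a + e) := by ring
  rw [hsum, div_sq_eq (by omega) (by omega), div_sq_eq (by omega) (by omega),
    div_sq_eq (by omega) (by omega)]

end quadSemigroup

theorem stmt_17 (n : ℕ) (hn : 3 ≤ n)
    (S : Set ℕ)
    (hS : S = (AddSubmonoid.closure {n ^ 2, n ^ 2 + 1, n ^ 2 + n, n ^ 2 + n + 1} :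
      AddSubmonoid ℕ)) :
    IsAGraded S ∧ multiplicityN S = n ^ 2 ∧ conductorN S = (n - 1) * n ^ 2 := by
  obtain rfl : S = quadSemigroup n := hS
  have hg := quadSemigroup.multiplicityN_eq (n := n) (by omega)
  have hc := quadSemigroup.conductorN_eq (n := n) (by omega)
  refine ⟨isAGraded_of_dvd (by rw [hg, hc]; exact dvd_mul_left _ _) ?_, hg, hc⟩
  intro x hx y hy hxy
  have hlt := lt_add_multiplicityN_of_mem_aperySet (fun _ ↦ quadSemigroup.mem_of_le (by omega)) hxy
  rw [hg, ← add_one_mul, Nat.sub_add_cancel (by omega)] at hlt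
  rw [hg]
  exact quadSemigroup.add_div_sq hx.1 hy.1 hlt
end

section
/- For every integer n ≥ 3, the numerical semigroup S = ⟨n², n²+1, n²+n, n²+n+1⟩ satisfies Wilf's inequality with embedding dimension 4: (3+1)·Ω ≤ 3·c, i.e., Ω/c ≤ 3/4, where Ω := #(ℕ \ S) and c is the conductor of S. -/
/-!
With `g = n²` the generators are `g, g + 1, g + n, g + n + 1`, so the elements of `S` are exactly
the numbers `k n² + p n + q` with `p, q ≤ k`. For `n ≥ 2` every `x ≥ (n - 1) n²` has this form
(read off its base-`n` digits), whereas every element with `k < n - 1` lies below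
`(n - 1) n² - 1`; hence `c = (n - 1) n²`. The triples with `k < n - 1` are base-`n` digit
strings, so `S` has at least `∑_{k < n - 1} (k + 1)²` elements below `c`, and with
`N = n - 1` Wilf's bound becomes `N (N + 1)² ≤ 4 ∑_{k < N} (k + 1)²`.
-/

open Finset

theorem AddSubmonoid.mem_closure_parallelogram_iff {M : Type*} [AddCommMonoid M] {g u v x : M} :
    x ∈ closure {g, g + v, g + u, g + u + v} ↔
      ∃ k p q : ℕ, p ≤ k ∧ q ≤ k ∧ k • g + p • u + q • v = x := by
  constructor
  · intro hx
    induction hx using closure_induction with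
    | mem y hy =>
      rcases hy with rfl | rfl | rfl | rfl
      · exact ⟨1, 0, 0, by simp⟩
      · exact ⟨1, 0, 1, by simp⟩
      · exact ⟨1, 1, 0, by simp⟩
      · exact ⟨1, 1, 1, by simp⟩
    | zero => exact ⟨0, 0, 0, by simp⟩
    | add y z _ _ hy hz =>
      obtain ⟨k, p, q, hp, hq, rfl⟩ := hy
      obtain ⟨k', p', q', hp', hq', rfl⟩ := hz
      refine ⟨k + k', p + p', q + q', by omega, by omega, ?_⟩
      simp only [add_nsmul]
      abel
  · rintro ⟨k, p, q, hp, hq, rfl⟩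
    -- use `min p q` copies of `g + u + v`, then the surplus `g + u`s or `g + v`s, then `g`s
    obtain ⟨a, b, c, d, rfl, rfl, rfl⟩ :
        ∃ a b c d : ℕ, k = a + b + c + d ∧ p = c + d ∧ q = b + d := by
      rcases le_total p q with h | h
      · exact ⟨k - q, q - p, 0, p, by omega, by omega, by omega⟩
      · exact ⟨k - p, 0, p - q, q, by omega, by omega, by omega⟩
    have hg : g ∈ closure {g, g + v, g + u, g + u + v} := subset_closure (by simp)
    have hgv : g + v ∈ closure {g, g + v, g + u, g + u + v} := subset_closure (by simp)
    have hgu : g + u ∈ closure {g, g + v, g + u, g + u + v} := subset_closure (by simp)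
    have hguv : g + u + v ∈ closure {g, g + v, g + u, g + u + v} := subset_closure (by simp)
    convert add_mem (add_mem (add_mem (nsmul_mem hg a) (nsmul_mem hgv b))
      (nsmul_mem hgu c)) (nsmul_mem hguv d) using 1
    simp only [add_nsmul, nsmul_add]
    abel

section BaseDigits

variable {b k p q : ℕ}

theorem Nat.div_mod_eq_of_base_repr (hp : p < b) (hq : q < b) :
    (k * b ^ 2 + p * b + q) / b / b = k ∧ (k * b ^ 2 + p * b + q) / b % b = p ∧
      (k * b ^ 2 + p * b + q) % b = q := by
  have hb : 0 < b := by omega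
  obtain ⟨h₁, h₂⟩ :=
    (Nat.div_mod_unique (a := k * b ^ 2 + p * b + q) (d := k * b + p) (c := q) hb).2
      ⟨by ring, hq⟩
  obtain ⟨h₃, h₄⟩ :=
    (Nat.div_mod_unique (a := k * b + p) (d := k) (c := p) hb).2 ⟨by ring, hp⟩
  rw [h₁]
  exact ⟨h₃, h₄, h₂⟩

theorem Nat.base_repr_injective {k' p' q' : ℕ} (hp : p < b) (hq : q < b) (hp' : p' < b)
    (hq' : q' < b) (h : k * b ^ 2 + p * b + q = k' * b ^ 2 + p' * b + q') :
    k = k' ∧ p = p' ∧ q = q' := by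
  obtain ⟨hk₁, hp₁, hq₁⟩ := Nat.div_mod_eq_of_base_repr (k := k) hp hq
  obtain ⟨hk₂, hp₂, hq₂⟩ := Nat.div_mod_eq_of_base_repr (k := k') hp' hq'
  rw [h] at hk₁ hp₁ hq₁
  exact ⟨hk₁.symm.trans hk₂, hp₁.symm.trans hp₂, hq₁.symm.trans hq₂⟩

theorem Nat.base_repr_div_mod (x b : ℕ) : x / b / b * b ^ 2 + x / b % b * b + x % b = x := by
  have h₁ := Nat.div_add_mod x b
  have h₂ := Nat.div_add_mod (x / b) b
  rw [← h₂] at h₁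
  linarith

theorem Nat.base_repr_add_one_lt (hp : p ≤ k) (hq : q ≤ k) (hk : k + 1 < b) :
    k * b ^ 2 + p * b + q + 1 < (b - 1) * b ^ 2 := by
  obtain ⟨c, rfl⟩ : ∃ c, b = k + 2 + c := ⟨b - (k + 2), by omega⟩
  have : p * (k + 2 + c) ≤ k * (k + 2 + c) := Nat.mul_le_mul_right _ hp
  rw [show k + 2 + c - 1 = k + 1 + c by omega]
  nlinarith

end BaseDigits

theorem conductorN_eq_of_forall_le_mem {S : Set ℕ} {c : ℕ} (hc : ∀ y, c ≤ y → y ∈ S)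
    (hc₀ : 0 < c) (hgap : c - 1 ∉ S) : conductorN S = c := by
  have hmem : conductorN S ∈ {m : ℕ | ∀ y, m ≤ y → y ∈ S} := Nat.sInf_mem ⟨c, hc⟩
  have hle : conductorN S ≤ c := Nat.sInf_le hc
  by_contra hne
  exact hgap (hmem _ (by omega))

theorem ncard_univ_diff_add_card_le {S : Set ℕ} {c : ℕ} (hc : ∀ y, c ≤ y → y ∈ S)
    {T : Finset ℕ} (hTS : ↑T ⊆ S) (hTc : ∀ y ∈ T, y < c) :
    (Set.univ \ S).ncard + #T ≤ c := by
  have hT : T ⊆ range c := fun y hy => mem_range.2 (hTc y hy)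
  have hgaps : Set.univ \ S ⊆ ↑(range c \ T) := by
    rintro y ⟨-, hy⟩
    simp only [coe_sdiff, coe_range, Set.mem_sdiff, Set.mem_Iio, mem_coe]
    exact ⟨by_contra fun h => hy (hc y (not_lt.1 h)), fun h => hy (hTS h)⟩
  have := Set.ncard_le_ncard hgaps (Finset.finite_toSet _)
  rw [Set.ncard_coe_finset, card_sdiff_of_subset hT, card_range] at this
  have := card_le_card hT
  rw [card_range] at this
  omega

theorem Nat.mul_succ_sq_le_four_mul_sum_sq (N : ℕ) :
    N * (N + 1) ^ 2 ≤ 4 * ∑ k ∈ range N, (k + 1) ^ 2 := by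
  induction N with
  | zero => simp
  | succ N ih =>
    rw [sum_range_succ]
    nlinarith

def baseSemigroup (b : ℕ) : AddSubmonoid ℕ :=
  AddSubmonoid.closure {b ^ 2, b ^ 2 + 1, b ^ 2 + b, b ^ 2 + b + 1}

section BaseSemigroup

variable {b : ℕ}

theorem mem_baseSemigroup_iff {x : ℕ} :
    x ∈ baseSemigroup b ↔
      ∃ k p q : ℕ, p ≤ k ∧ q ≤ k ∧ k * b ^ 2 + p * b + q = x := by
  simp only [baseSemigroup, AddSubmonoid.mem_closure_parallelogram_iff, smul_eq_mul, mul_one]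

theorem mem_baseSemigroup_of_le (hb : 0 < b) {x : ℕ} (hx : (b - 1) * b ^ 2 ≤ x) :
    x ∈ baseSemigroup b := by
  have hk : b - 1 ≤ x / b / b := by
    rw [Nat.div_div_eq_div_mul, Nat.le_div_iff_mul_le (by positivity)]
    simpa [sq] using hx
  have hp : x / b % b < b := Nat.mod_lt _ hb
  have hq : x % b < b := Nat.mod_lt _ hb
  exact mem_baseSemigroup_iff.2 ⟨_, _, _, by omega, by omega, Nat.base_repr_div_mod x b⟩

theorem sub_one_notMem_baseSemigroup (hb : 2 ≤ b) : (b - 1) * b ^ 2 - 1 ∉ baseSemigroup b := by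
  intro hx
  obtain ⟨k, p, q, hp, hq, hx⟩ := mem_baseSemigroup_iff.1 hx
  have hpos : 0 < (b - 1) * b ^ 2 := Nat.mul_pos (by omega) (by positivity)
  by_cases hk : k + 1 < b
  · have := Nat.base_repr_add_one_lt hp hq hk
    omega
  · have : (b - 1) * b ^ 2 ≤ k * b ^ 2 := Nat.mul_le_mul_right _ (by omega)
    omega

theorem conductorN_baseSemigroup (hb : 2 ≤ b) :
    conductorN (baseSemigroup b) = (b - 1) * b ^ 2 :=
  conductorN_eq_of_forall_le_mem (fun _ => mem_baseSemigroup_of_le (by omega))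
    (Nat.mul_pos (by omega) (by positivity))
    (sub_one_notMem_baseSemigroup hb)

end BaseSemigroup

def smallElements (b : ℕ) : Finset ℕ :=
  ((range (b - 1)).sigma fun k => range (k + 1) ×ˢ range (k + 1)).image
    fun t => t.1 * b ^ 2 + t.2.1 * b + t.2.2

section SmallElements

variable {b : ℕ}

theorem mem_smallElements_iff {x : ℕ} : x ∈ smallElements b ↔
    ∃ k p q : ℕ, k + 1 < b ∧ p ≤ k ∧ q ≤ k ∧ k * b ^ 2 + p * b + q = x := by
  simp only [smallElements, mem_image, mem_sigma, mem_product, mem_range, Sigma.exists,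
    Prod.exists, Nat.lt_succ_iff]
  constructor
  · rintro ⟨k, p, q, ⟨hk, hp, hq⟩, rfl⟩
    exact ⟨k, p, q, by omega, hp, hq, rfl⟩
  · rintro ⟨k, p, q, hk, hp, hq, rfl⟩
    exact ⟨k, p, q, ⟨by omega, hp, hq⟩, rfl⟩

theorem coe_smallElements_subset : ↑(smallElements b) ⊆ (baseSemigroup b : Set ℕ) := by
  intro x hx
  obtain ⟨k, p, q, -, hp, hq, rfl⟩ := mem_smallElements_iff.1 hx
  exact mem_baseSemigroup_iff.2 ⟨k, p, q, hp, hq, rfl⟩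

theorem lt_of_mem_smallElements {x : ℕ} (hx : x ∈ smallElements b) : x < (b - 1) * b ^ 2 := by
  obtain ⟨k, p, q, hk, hp, hq, rfl⟩ := mem_smallElements_iff.1 hx
  have := Nat.base_repr_add_one_lt hp hq hk
  omega

theorem card_smallElements : #(smallElements b) = ∑ k ∈ range (b - 1), (k + 1) ^ 2 := by
  rw [smallElements, card_image_of_injOn, card_sigma]
  · simp [sq]
  · rintro ⟨k, p, q⟩ h ⟨k', p', q'⟩ h' heq
    simp only [coe_sigma, Set.mem_sigma_iff, coe_range, Set.mem_Iio, coe_product,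
      Set.mem_prod] at h h'
    obtain ⟨rfl, rfl, rfl⟩ := Nat.base_repr_injective (p := p) (q := q) (p' := p') (q' := q')
      (by omega) (by omega) (by omega) (by omega) heq
    rfl

theorem le_four_mul_card_smallElements (hb : 0 < b) :
    (b - 1) * b ^ 2 ≤ 4 * #(smallElements b) := by
  obtain ⟨N, rfl⟩ : ∃ N, b = N + 1 := ⟨b - 1, by omega⟩
  rw [card_smallElements, Nat.add_sub_cancel]
  exact Nat.mul_succ_sq_le_four_mul_sum_sq N

end SmallElements

theorem stmt_18 (n : ℕ) (hn : 3 ≤ n)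
    (S : Set ℕ)
    (hS : S = (AddSubmonoid.closure {n ^ 2, n ^ 2 + 1, n ^ 2 + n, n ^ 2 + n + 1} :
      AddSubmonoid ℕ)) :
    (3 + 1) * (Set.univ \ S).ncard ≤ 3 * conductorN S := by
  obtain rfl : S = baseSemigroup n := hS
  have hcount := ncard_univ_diff_add_card_le (fun _ => mem_baseSemigroup_of_le (b := n) (by omega))
    coe_smallElements_subset fun _ => lt_of_mem_smallElements
  have hsmall := le_four_mul_card_smallElements (b := n) (by omega)
  rw [conductorN_baseSemigroup (by omega)]
  omega
end

section
/- For every integer p ≥ 9, the numerical semigroup S generated by p, 2p+1, 2p+3, 3p+4 is A-graded, and its conductor equals c = ⌊2p/3⌋·p. -/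
/-!
Write `kunz r` for the least `q` with `p * q + r ∈ S` (`r < p`): then `n ∈ S` iff
`kunz (n % p) ≤ n / p`, and the Apéry set is `{p * kunz r + r | r < p}`. Here `kunz r ≈ 2r/3`,
with maximum `⌊2p/3⌋` at `r = p - 1`, which gives the conductor `⌊2p/3⌋ * p`. It is a multiple
of `p`, so `ρ = 0` and `A_i` is the set of Apéry elements with quotient `i`. Adding two Apéry
elements adds their quotients, plus one if their residues carry past `p`; a sum with a carry is
never in the Apéry set, since `kunz (r + s - p) ≈ 2(r + s - p)/3` falls short of
`kunz r + kunz s + 1` once `p ≥ 9`.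
-/

theorem multiplicityN_eq {S : Set ℕ} {p : ℕ} (hp : 0 < p) (hpS : p ∈ S)
    (hmin : ∀ s ∈ S, 0 < s → p ≤ s) : multiplicityN S = p :=
  le_antisymm (Nat.sInf_le ⟨hpS, hp⟩) (le_csInf ⟨p, hpS, hp⟩ fun s hs => hmin s hs.1 hs.2)

theorem conductorN_eq {S : Set ℕ} {c : ℕ} (hc : ∀ n, c ≤ n → n ∈ S) (hpred : c - 1 ∉ S) :
    conductorN S = c := by
  refine le_antisymm (Nat.sInf_le hc) (le_csInf ⟨c, hc⟩ fun b hb => ?_)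
  by_contra! hbc
  exact hpred (hb _ (by omega))

theorem mem_aperyPiece_iff_of_dvd {S : Set ℕ} {a i : ℕ}
    (hdvd : multiplicityN S ∣ conductorN S) :
    a ∈ aperyPiece S i ↔ a ∈ aperySet S ∧ a / multiplicityN S = i := by
  have hρ : (conductorN S ⌈/⌉ multiplicityN S) * multiplicityN S - conductorN S = 0 := by
    obtain ⟨k, hk⟩ := hdvd
    rcases (multiplicityN S).eq_zero_or_pos with h | h
    · simp [h]
    · have hceil : multiplicityN S * k ⌈/⌉ multiplicityN S = k := smul_ceilDiv h k
      rw [hk, hceil, mul_comm, Nat.sub_self]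
  simp only [aperyPiece, hρ, add_zero, Set.mem_ofPred_eq]

/-- `m` gives the Kunz coordinates of `S` with respect to `p`: for `r < p`, `p * m r + r` is the
least element of `S` congruent to `r` modulo `p`. -/
def HasKunzCoords (S : Set ℕ) (p : ℕ) (m : ℕ → ℕ) : Prop :=
  ∀ n, n ∈ S ↔ m (n % p) ≤ n / p

namespace HasKunzCoords

variable {S : Set ℕ} {p : ℕ} {m : ℕ → ℕ}

theorem multiplicityN_eq (hS : HasKunzCoords S p m) (hp : 0 < p) (h0 : m 0 = 0)
    (hpos : ∀ r, 0 < r → r < p → 0 < m r) : multiplicityN S = p := by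
  refine _root_.multiplicityN_eq hp ((hS p).2 (by simp [h0])) fun s hs hs0 => ?_
  by_contra! hsp
  have := (hS s).1 hs
  rw [Nat.mod_eq_of_lt hsp, Nat.div_eq_of_lt hsp] at this
  exact (hpos s hs0 hsp).ne' (Nat.le_zero.1 this)

theorem conductorN_eq (hS : HasKunzCoords S p m) (hp : 0 < p) {M : ℕ} (hM : 0 < M)
    (hle : ∀ r < p, m r ≤ M) (htop : M ≤ m (p - 1)) : conductorN S = M * p := by
  refine _root_.conductorN_eq (fun n hn => (hS n).2 ?_) fun hmem => ?_
  · exact (hle _ (Nat.mod_lt n hp)).trans ((Nat.le_div_iff_mul_le hp).2 hn)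
  · have hsplit : M * p - 1 = (p - 1) + p * (M - 1) := by
      have : M * p = p * (M - 1) + p := by
        conv_lhs => rw [← Nat.sub_add_cancel hM]
        ring
      omega
    obtain ⟨hdiv, hmod⟩ := (Nat.div_mod_unique hp).2 ⟨hsplit.symm, Nat.sub_lt hp one_pos⟩
    have := (hS _).1 hmem
    rw [hdiv, hmod] at this
    omega

theorem mem_aperySet_iff (hS : HasKunzCoords S p m) (hp : 0 < p)
    (hmult : multiplicityN S = p) (a : ℕ) : a ∈ aperySet S ↔ m (a % p) = a / p := by
  simp only [aperySet, hmult, Set.mem_ofPred_eq]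
  constructor
  · rintro ⟨haS, hnot⟩
    refine le_antisymm ((hS a).1 haS) (not_lt.1 fun hlt => ?_)
    obtain ⟨t, rfl⟩ : ∃ t, a = t + p := by
      refine ⟨a - p, (Nat.sub_add_cancel ?_).symm⟩
      by_contra! hap
      rw [Nat.div_eq_of_lt hap] at hlt
      omega
    rw [Nat.add_mod_right, Nat.add_div_right _ hp] at hlt
    exact hnot t ((hS t).2 (by omega)) rfl
  · intro h
    refine ⟨(hS a).2 h.le, fun t ht hat => ?_⟩
    subst hat
    rw [Nat.add_mod_right, Nat.add_div_right _ hp] at h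
    have := (hS t).1 ht
    omega

theorem isAGraded (hS : HasKunzCoords S p m) (hp : 0 < p) (hmult : multiplicityN S = p)
    (hdvd : p ∣ conductorN S)
    (hcarry : ∀ r s, r < p → s < p → p ≤ r + s → m (r + s - p) ≤ m r + m s) :
    IsAGraded S := by
  intro i j a ha b hb hab
  rw [mem_aperyPiece_iff_of_dvd (hmult ▸ hdvd), hmult] at ha hb ⊢
  refine ⟨hab, ?_⟩
  rw [hS.mem_aperySet_iff hp hmult] at ha hb hab
  rw [Nat.add_div hp] at hab ⊢
  split_ifs at hab ⊢ with hc
  · have hmod : (a + b) % p = a % p + b % p - p := by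
      rw [Nat.add_mod, Nat.mod_eq_sub_mod hc, Nat.mod_eq_of_lt]
      have := Nat.mod_lt a hp
      have := Nat.mod_lt b hp
      omega
    have := hcarry _ _ (Nat.mod_lt a hp) (Nat.mod_lt b hp) hc
    rw [hmod] at hab
    omega
  · omega

end HasKunzCoords

/-- The Kunz coordinates of `⟨p, 2p+1, 2p+3, 3p+4⟩` for `p ≥ 9`: the generators `2p+1, 2p+3, 3p+4`
contribute `1, 3, 4` to the residue and `2, 2, 3` to the quotient, and `kunz r` is the least
`2a + 2b + 3c` with `a + 3b + 4c = r`. -/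
def kunz (r : ℕ) : ℕ :=
  if r = 1 then 2 else if r = 2 then 4 else if r = 5 then 5 else 2 * (r / 3) + r % 3

theorem kunz_zero : kunz 0 = 0 := rfl

theorem kunz_pos {r : ℕ} (hr : 0 < r) : 0 < kunz r := by
  unfold kunz; split_ifs <;> omega

theorem kunz_add_le (r s : ℕ) : kunz (r + s) ≤ kunz r + kunz s := by
  unfold kunz; split_ifs <;> omega

theorem kunz_add_sub_lt {p r s : ℕ} (hp : 9 ≤ p) (hrs : p ≤ r + s) :
    kunz (r + s - p) < kunz r + kunz s := by
  unfold kunz; split_ifs <;> omega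

theorem kunz_le {p r : ℕ} (hp : 9 ≤ p) (hr : r < p) : kunz r ≤ 2 * p / 3 := by
  unfold kunz; split_ifs <;> omega

theorem kunz_sub_one {p : ℕ} (hp : 9 ≤ p) : kunz (p - 1) = 2 * p / 3 := by
  unfold kunz; split_ifs <;> omega

theorem exists_kunz_repr (r : ℕ) :
    ∃ a b c : ℕ, a + 3 * b + 4 * c = r ∧ 2 * a + 2 * b + 3 * c = kunz r := by
  rcases (by omega : r = 1 ∨ r = 2 ∨ r = 5 ∨ r % 3 = 0 ∨ (r % 3 = 1 ∧ 4 ≤ r) ∨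
      (r % 3 = 2 ∧ 8 ≤ r)) with h | h | h | h | h | h
  · exact ⟨1, 0, 0, by subst h; decide⟩
  · exact ⟨2, 0, 0, by subst h; decide⟩
  · exact ⟨1, 0, 1, by subst h; decide⟩
  · exact ⟨0, r / 3, 0, by unfold kunz; split_ifs <;> omega⟩
  · exact ⟨0, (r - 4) / 3, 1, by unfold kunz; split_ifs <;> omega⟩
  · exact ⟨0, (r - 8) / 3, 2, by unfold kunz; split_ifs <;> omega⟩

theorem kunz_mod_le_div_add {p : ℕ} (hp : 9 ≤ p) {x y : ℕ} (hx : kunz (x % p) ≤ x / p)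
    (hy : kunz (y % p) ≤ y / p) : kunz ((x + y) % p) ≤ (x + y) / p := by
  have hp0 : 0 < p := by omega
  rw [Nat.add_div hp0, Nat.add_mod]
  split_ifs with hc
  · have := Nat.mod_lt x hp0
    have := Nat.mod_lt y hp0
    rw [Nat.mod_eq_sub_mod hc, Nat.mod_eq_of_lt (by omega)]
    have := kunz_add_sub_lt hp hc
    omega
  · rw [Nat.mod_eq_of_lt (by omega)]
    have := kunz_add_le (x % p) (y % p)
    omega

theorem hasKunzCoords_closure {p : ℕ} (hp : 9 ≤ p) :
    HasKunzCoords (AddSubmonoid.closure {p, 2 * p + 1, 2 * p + 3, 3 * p + 4} : AddSubmonoid ℕ)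
      p kunz := by
  have hp0 : 0 < p := by omega
  intro n
  constructor
  · intro hn
    induction hn using AddSubmonoid.closure_induction with
    | mem x hx =>
      have hdecomp : ∀ q r, r < p → kunz r ≤ q → kunz ((p * q + r) % p) ≤ (p * q + r) / p := by
        intro q r hr h
        rwa [Nat.mul_add_mod, Nat.mul_add_div hp0, Nat.mod_eq_of_lt hr, Nat.div_eq_of_lt hr,
          add_zero]
      simp only [Set.mem_insert_iff, Set.mem_singleton_iff] at hx
      rcases hx with rfl | rfl | rfl | rfl
      · simpa using hdecomp 1 0 hp0 (by decide)
      · simpa [mul_comm] using hdecomp 2 1 (by omega) (by decide)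
      · simpa [mul_comm] using hdecomp 2 3 (by omega) (by decide)
      · simpa [mul_comm] using hdecomp 3 4 (by omega) (by decide)
    | zero => simp [kunz_zero]
    | add x y _ _ hx hy => exact kunz_mod_le_div_add hp hx hy
  · intro h
    obtain ⟨a, b, c, hres, hcost⟩ := exists_kunz_repr (n % p)
    obtain ⟨k, hk⟩ : ∃ k, n / p = k + kunz (n % p) := ⟨_, (Nat.sub_add_cancel h).symm⟩
    have hn : n = k • p + a • (2 * p + 1) + b • (2 * p + 3) + c • (3 * p + 4) := by
      have := Nat.div_add_mod n p
      rw [hk, ← hcost, ← hres] at this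
      rw [← this]
      simp only [smul_eq_mul]
      ring
    have hgen : ∀ g ∈ ({p, 2 * p + 1, 2 * p + 3, 3 * p + 4} : Set ℕ), ∀ j : ℕ,
        j • g ∈ AddSubmonoid.closure {p, 2 * p + 1, 2 * p + 3, 3 * p + 4} :=
      fun g hg j => AddSubmonoid.nsmul_mem _ (AddSubmonoid.subset_closure hg) j
    rw [hn]
    refine add_mem (add_mem (add_mem (hgen _ ?_ _) (hgen _ ?_ _)) (hgen _ ?_ _)) (hgen _ ?_ _) <;>
      simp

theorem stmt_19 (p : ℕ) (hp : 9 ≤ p)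
    (S : Set ℕ)
    (hS : S = (AddSubmonoid.closure {p, 2 * p + 1, 2 * p + 3, 3 * p + 4} :
      AddSubmonoid ℕ)) :
    IsAGraded S ∧ conductorN S = (2 * p / 3) * p := by
  have hp0 : 0 < p := by omega
  have hkunz : HasKunzCoords S p kunz := hS ▸ hasKunzCoords_closure hp
  have hmult : multiplicityN S = p :=
    hkunz.multiplicityN_eq hp0 kunz_zero fun _ hr _ => kunz_pos hr
  have hcond : conductorN S = 2 * p / 3 * p :=
    hkunz.conductorN_eq hp0 (by omega) (fun _ hr => kunz_le hp hr) (kunz_sub_one hp).ge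
  exact ⟨hkunz.isAGraded hp0 hmult (hcond ▸ dvd_mul_left _ _)
    fun _ _ _ _ hrs => (kunz_add_sub_lt hp hrs).le, hcond⟩
end
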